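/- arXiv:2505.07799 — 2 statements merged into one kernel-verified Lean document; each statement's English description precedes it below -/
import Mathlib

section
/- Let ε₁, ε₂ > 0 and let f be an isomorphism of the unit distance graphs of ℝ × [0,ε₁] and ℝ × [0,ε₂]. If y ∈ ℝ × {0, ε₁} (i.e., y is on the boundary of the first strip), then f(y) ∈ ℝ × {0, ε₂}. -/
noncomputable section

/-- The strip `ℝ × [0, ε]` as a subset of the Euclidean plane; coordinate `0` is the
horizontal coordinate and coordinate `1` is the vertical coordinate. -/
def Strip (ε : ℝ) : Set (EuclideanSpace ℝ (Fin 2)) := {p | p 1 ∈ Set.Icc 0 ε}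

/-- The unit distance graph of the strip: two points are adjacent iff their Euclidean
distance is exactly `1`. -/
def stripGraph (ε : ℝ) : SimpleGraph (Strip ε) where
  Adj x y := dist x.1 y.1 = 1
  symm := ⟨fun x y h => (dist_comm _ _).trans h⟩
  loopless := ⟨fun x h => by simp at h⟩

/-- `v` lies strictly between `u` and `w` (in either order). -/
def StrictBetween (u v w : ℝ) : Prop := (u < v ∧ v < w) ∨ (w < v ∧ v < u)

namespace StripAux

abbrev E2 := EuclideanSpace ℝ (Fin 2)

lemma sq_zero {u : ℝ} (h : u ^ 2 = 0) : u = 0 := by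
  exact pow_eq_zero_iff (by norm_num) |>.mp h

lemma sum_sq_zero {u v : ℝ} (h : u ^ 2 + v ^ 2 = 0) : u = 0 ∧ v = 0 := by
  constructor
  · exact sq_zero (le_antisymm (by nlinarith [sq_nonneg v]) (sq_nonneg u))
  · exact sq_zero (le_antisymm (by nlinarith [sq_nonneg u]) (sq_nonneg v))

lemma dist_sq (x y : E2) : dist x y ^ 2 = (x 0 - y 0) ^ 2 + (x 1 - y 1) ^ 2 := by
  rw [EuclideanSpace.dist_eq, Real.sq_sqrt (by positivity)]
  simp [Fin.sum_univ_two, Real.dist_eq, sq_abs]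

lemma dist_eq_one_iff (x y : E2) :
    dist x y = 1 ↔ (x 0 - y 0) ^ 2 + (x 1 - y 1) ^ 2 = 1 := by
  rw [← dist_sq]
  constructor
  · intro h; rw [h]; norm_num
  · intro h
    have h0 : 0 ≤ dist x y := dist_nonneg
    have : (dist x y - 1) * (dist x y + 1) = 0 := by nlinarith
    rcases mul_eq_zero.mp this with h' | h'
    · linarith
    · linarith

lemma dist_eq_two_iff (x y : E2) :
    dist x y = 2 ↔ (x 0 - y 0) ^ 2 + (x 1 - y 1) ^ 2 = 4 := by
  rw [← dist_sq]
  constructor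
  · intro h; rw [h]; norm_num
  · intro h
    have h0 : 0 ≤ dist x y := dist_nonneg
    have : (dist x y - 2) * (dist x y + 2) = 0 := by nlinarith
    rcases mul_eq_zero.mp this with h' | h'
    · linarith
    · linarith

lemma pt_ext {x y : E2} (h0 : x 0 = y 0) (h1 : x 1 = y 1) : x = y := by
  ext i
  fin_cases i
  · exact h0
  · exact h1

lemma pt_ne_of_ne0 {x y : E2} (h : x 0 ≠ y 0) : x ≠ y := fun he => h (by rw [he])
lemma pt_ne_of_ne1 {x y : E2} (h : x 1 ≠ y 1) : x ≠ y := fun he => h (by rw [he])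

/-- tangency: if `dist u w = 2` then any common unit-distance point is the midpoint -/
lemma tangent_mid {u w z : E2} (h2 : dist u w = 2) (ha : dist z u = 1) (hb : dist z w = 1) :
    z 0 = (u 0 + w 0) / 2 ∧ z 1 = (u 1 + w 1) / 2 := by
  rw [dist_eq_two_iff] at h2
  rw [dist_eq_one_iff] at ha hb
  have key : ((u 0 - z 0) - (z 0 - w 0)) ^ 2 + ((u 1 - z 1) - (z 1 - w 1)) ^ 2 = 0 := by
    linear_combination 2 * ha + 2 * hb - h2
  obtain ⟨k0, k1⟩ := sum_sq_zero key
  constructor <;> linarith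

lemma alg_cross {d0 d1 e0 e1 v0 v1 : ℝ} (hd : d0 ^ 2 + d1 ^ 2 ≠ 0) (he : e0 ^ 2 + e1 ^ 2 ≠ 0)
    (hde : d0 * e0 + d1 * e1 = 0) (hvd : d0 * v0 + d1 * v1 = 0)
    (hve : e0 * v0 + e1 * v1 = 0) : v0 = 0 ∧ v1 = 0 := by
  have h1 : 0 < d0 ^ 2 + d1 ^ 2 := lt_of_le_of_ne (by positivity) (Ne.symm hd)
  have h2 : 0 < e0 ^ 2 + e1 ^ 2 := lt_of_le_of_ne (by positivity) (Ne.symm he)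
  have hcross : (d0 * e1 - d1 * e0) ^ 2 > 0 := by nlinarith
  have hcne : d0 * e1 - d1 * e0 ≠ 0 := by
    intro h; rw [h] at hcross; simp at hcross
  constructor
  · have hid : v0 * (d0 * e1 - d1 * e0) =
      (d0 * v0 + d1 * v1) * e1 - (e0 * v0 + e1 * v1) * d1 := by ring
    rw [hvd, hve] at hid; simp at hid
    rcases hid with h | h
    · exact h
    · exact absurd h hcne
  · have hid : v1 * (d0 * e1 - d1 * e0) =
      (e0 * v0 + e1 * v1) * d0 - (d0 * v0 + d1 * v1) * e0 := by ring
    rw [hvd, hve] at hid; simp at hid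
    rcases hid with h | h
    · exact h
    · exact absurd h hcne

/-- two distinct common unit-distance points of `x ≠ y` sum to `x + y` (coordinatewise) -/
lemma two_common {x y z₁ z₂ : E2} (hxy : x ≠ y) (hz : z₁ ≠ z₂)
    (h1 : dist z₁ x = 1) (h2 : dist z₁ y = 1) (h3 : dist z₂ x = 1) (h4 : dist z₂ y = 1) :
    z₁ 0 + z₂ 0 = x 0 + y 0 ∧ z₁ 1 + z₂ 1 = x 1 + y 1 := by
  rw [dist_eq_one_iff] at h1 h2 h3 h4
  have hd : (z₁ 0 - z₂ 0) ^ 2 + (z₁ 1 - z₂ 1) ^ 2 ≠ 0 := by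
    intro h
    obtain ⟨k0, k1⟩ := sum_sq_zero h
    exact hz (pt_ext (by linarith) (by linarith))
  have he : (x 0 - y 0) ^ 2 + (x 1 - y 1) ^ 2 ≠ 0 := by
    intro h
    obtain ⟨k0, k1⟩ := sum_sq_zero h
    exact hxy (pt_ext (by linarith) (by linarith))
  have hde : (z₁ 0 - z₂ 0) * (x 0 - y 0) + (z₁ 1 - z₂ 1) * (x 1 - y 1) = 0 := by
    linear_combination (-h1 + h2 + h3 - h4) / 2
  have hvd : (z₁ 0 - z₂ 0) * (z₁ 0 + z₂ 0 - x 0 - y 0) +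
      (z₁ 1 - z₂ 1) * (z₁ 1 + z₂ 1 - x 1 - y 1) = 0 := by
    linear_combination (h1 + h2 - h3 - h4) / 2
  have hve : (x 0 - y 0) * (z₁ 0 + z₂ 0 - x 0 - y 0) +
      (x 1 - y 1) * (z₁ 1 + z₂ 1 - x 1 - y 1) = 0 := by
    linear_combination (-h1 + h2 - h3 + h4) / 2
  obtain ⟨hv0, hv1⟩ := alg_cross hd he hde hvd hve
  constructor <;> linarith



/-- The graph-theoretic invariant: three pairs of neighbors of `p`, six cross-distinct
points, each pair having `p` as unique common neighbor, all mixed pairs having two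
distinct common neighbors. Holds exactly at interior points. -/
def P3 (ε : ℝ) (p : Strip ε) : Prop :=
  ∃ a b : Fin 3 → Strip ε,
    (∀ i j, i ≠ j → a i ≠ a j ∧ a i ≠ b j ∧ b i ≠ b j) ∧
    (∀ i, (stripGraph ε).Adj p (a i) ∧ (stripGraph ε).Adj p (b i)) ∧
    (∀ i z, (stripGraph ε).Adj z (a i) → (stripGraph ε).Adj z (b i) → z = p) ∧
    (∀ i j, i ≠ j → ∀ x y : Strip ε, (x = a i ∨ x = b i) → (y = a j ∨ y = b j) →
      ∃ z₁ z₂ : Strip ε, z₁ ≠ z₂ ∧ (stripGraph ε).Adj z₁ x ∧ (stripGraph ε).Adj z₁ y ∧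
        (stripGraph ε).Adj z₂ x ∧ (stripGraph ε).Adj z₂ y)

lemma strip_mem_iff {ε : ℝ} (x : E2) : x ∈ Strip ε ↔ 0 ≤ x 1 ∧ x 1 ≤ ε := by
  simp [Strip]

lemma adj_iff {ε : ℝ} (x y : Strip ε) : (stripGraph ε).Adj x y ↔ dist x.1 y.1 = 1 := Iff.rfl

lemma interior_P3 (ε : ℝ) (p : Strip ε) (h0 : 0 < p.1 1) (h1 : p.1 1 < ε) : P3 ε p := by
  set t := p.1 1 with ht
  set m : ℝ := min t (min (ε - t) 1) with hmdef
  have hm : 0 < m := lt_min h0 (lt_min (by linarith) one_pos)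
  have hmt : m ≤ t := min_le_left _ _
  have hmε : m ≤ ε - t := le_trans (min_le_right _ _) (min_le_left _ _)
  have hm1 : m ≤ 1 := le_trans (min_le_right _ _) (min_le_right _ _)
  set δ : ℝ := m / 8 with hδdef
  have hδ : 0 < δ := by positivity
  set σ : Fin 3 → ℝ := fun i => ((i : ℕ) + 1) * δ with hσdef
  have hσpos : ∀ i, 0 < σ i := by
    intro i; have : (0:ℝ) ≤ (i:ℕ) := Nat.cast_nonneg _
    simp only [hσdef]; nlinarith
  have hσle : ∀ i, σ i ≤ 3 * δ := by
    intro i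
    have h2 : ((i : ℕ) : ℝ) ≤ 2 := by exact_mod_cast Nat.lt_succ_iff.mp i.isLt
    simp only [hσdef]; nlinarith
  have hσlt1 : ∀ i, σ i < 1 := fun i => lt_of_le_of_lt (hσle i) (by linarith)
  have hσinj : ∀ i j : Fin 3, i ≠ j → σ i ≠ σ j := by
    intro i j hij h
    simp only [hσdef] at h
    have : ((i : ℕ) : ℝ) = ((j : ℕ) : ℝ) := by
      have h' := mul_right_cancel₀ (ne_of_gt hδ) h
      linarith
    exact hij (Fin.ext (by exact_mod_cast this))
  set c : Fin 3 → ℝ := fun i => Real.sqrt (1 - σ i ^ 2) with hcdef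
  have hc2 : ∀ i, c i ^ 2 = 1 - σ i ^ 2 := by
    intro i; simp only [hcdef]
    exact Real.sq_sqrt (by nlinarith [hσpos i, hσlt1 i])
  have hcpos : ∀ i, 0 < c i := by
    intro i; simp only [hcdef]
    exact Real.sqrt_pos.mpr (by nlinarith [hσpos i, hσlt1 i])
  set E0 : E2 := EuclideanSpace.single 0 1 with hE0
  set E1 : E2 := EuclideanSpace.single 1 1 with hE1
  have hσsmall : ∀ i, σ i < m := fun i => lt_of_le_of_lt (hσle i) (by linarith)
  have haMem : ∀ i, (p.1 + c i • E0 + σ i • E1) ∈ Strip ε := by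
    intro i
    rw [strip_mem_iff]
    have hco : (p.1 + c i • E0 + σ i • E1) 1 = t + σ i := by
      simp [hE0, hE1, EuclideanSpace.single_apply, ht]
    rw [hco]
    exact ⟨by nlinarith [hσpos i], by have := hσsmall i; linarith⟩
  have hbMem : ∀ i, (p.1 - c i • E0 - σ i • E1) ∈ Strip ε := by
    intro i
    rw [strip_mem_iff]
    have hco : (p.1 - c i • E0 - σ i • E1) 1 = t - σ i := by
      simp [hE0, hE1, EuclideanSpace.single_apply, ht]
    rw [hco]
    exact ⟨by have := hσsmall i; linarith, by have := hσpos i; linarith⟩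
  set a : Fin 3 → Strip ε := fun i => ⟨p.1 + c i • E0 + σ i • E1, haMem i⟩ with ha
  set b : Fin 3 → Strip ε := fun i => ⟨p.1 - c i • E0 - σ i • E1, hbMem i⟩ with hb
  have hA0 : ∀ i, (a i).1 0 = p.1 0 + c i := by
    intro i; simp [ha, hE0, hE1, EuclideanSpace.single_apply]
  have hA1 : ∀ i, (a i).1 1 = t + σ i := by
    intro i; simp [ha, hE0, hE1, EuclideanSpace.single_apply, ht]
  have hB0 : ∀ i, (b i).1 0 = p.1 0 - c i := by
    intro i; simp [hb, hE0, hE1, EuclideanSpace.single_apply]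
  have hB1 : ∀ i, (b i).1 1 = t - σ i := by
    intro i; simp [hb, hE0, hE1, EuclideanSpace.single_apply, ht]
  have hadjA : ∀ i, dist p.1 (a i).1 = 1 := by
    intro i
    rw [dist_eq_one_iff, hA0 i, hA1 i, ← ht]
    linear_combination hc2 i
  have hadjB : ∀ i, dist p.1 (b i).1 = 1 := by
    intro i
    rw [dist_eq_one_iff, hB0 i, hB1 i, ← ht]
    linear_combination hc2 i
  refine ⟨a, b, ?_, ?_, ?_, ?_⟩
  · -- cross distinctness
    intro i j hij
    refine ⟨?_, ?_, ?_⟩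
    · intro h
      have h' : (a i).1 1 = (a j).1 1 := by rw [h]
      rw [hA1 i, hA1 j] at h'
      exact hσinj i j hij (by linarith)
    · intro h
      have h' : (a i).1 0 = (b j).1 0 := by rw [h]
      rw [hA0 i, hB0 j] at h'
      have := hcpos i; have := hcpos j; linarith
    · intro h
      have h' : (b i).1 1 = (b j).1 1 := by rw [h]
      rw [hB1 i, hB1 j] at h'
      exact hσinj i j hij (by linarith)
  · intro i
    exact ⟨hadjA i, hadjB i⟩
  · -- uniqueness
    intro i z hza hzb
    have h2 : dist (a i).1 (b i).1 = 2 := by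
      rw [dist_eq_two_iff, hA0 i, hA1 i, hB0 i, hB1 i]
      linear_combination 4 * hc2 i
    have hza' : dist z.1 (a i).1 = 1 := hza
    have hzb' : dist z.1 (b i).1 = 1 := hzb
    obtain ⟨hc0, hc1⟩ := tangent_mid h2 hza' hzb'
    rw [hA0 i, hB0 i] at hc0
    rw [hA1 i, hB1 i] at hc1
    refine Subtype.ext (pt_ext ?_ ?_)
    · rw [hc0]; ring
    · rw [hc1, ← ht]; ring
  · -- mixed pairs
    intro i j hij x y hx hy
    have hx1 : x.1 1 = t + σ i ∨ x.1 1 = t - σ i := by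
      rcases hx with rfl | rfl
      · exact Or.inl (hA1 i)
      · exact Or.inr (hB1 i)
    have hy1 : y.1 1 = t + σ j ∨ y.1 1 = t - σ j := by
      rcases hy with rfl | rfl
      · exact Or.inl (hA1 j)
      · exact Or.inr (hB1 j)
    have hpx : dist p.1 x.1 = 1 := by
      rcases hx with rfl | rfl
      · exact hadjA i
      · exact hadjB i
    have hpy : dist p.1 y.1 = 1 := by
      rcases hy with rfl | rfl
      · exact hadjA j
      · exact hadjB j
    have hZ0 : (x.1 + y.1 - p.1) 0 = x.1 0 + y.1 0 - p.1 0 := by simp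
    have hZ1 : (x.1 + y.1 - p.1) 1 = x.1 1 + y.1 1 - t := by simp [ht]
    have hZmem : (x.1 + y.1 - p.1) ∈ Strip ε := by
      rw [strip_mem_iff, hZ1]
      have hi3 := hσle i; have hj3 := hσle j
      have hip := hσpos i; have hjp := hσpos j
      rcases hx1 with h | h <;> rcases hy1 with h' | h' <;> rw [h, h'] <;>
        exact ⟨by linarith, by linarith⟩
    set zv : Strip ε := ⟨x.1 + y.1 - p.1, hZmem⟩ with hzv
    have hZx : dist zv.1 x.1 = 1 := by
      rw [dist_eq_one_iff] at hpy ⊢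
      rw [show zv.1 = x.1 + y.1 - p.1 from rfl, hZ0, hZ1, ← ht] at *
      linear_combination hpy
    have hZy : dist zv.1 y.1 = 1 := by
      rw [dist_eq_one_iff] at hpx ⊢
      rw [show zv.1 = x.1 + y.1 - p.1 from rfl, hZ0, hZ1, ← ht] at *
      linear_combination hpx
    have hpz : p ≠ zv := by
      have hkey1 : p.1 1 ≠ zv.1 1 → p ≠ zv := fun h he => h (by rw [he])
      have hkey0 : p.1 0 ≠ zv.1 0 → p ≠ zv := fun h he => h (by rw [he])
      have hzv0 : zv.1 0 = x.1 0 + y.1 0 - p.1 0 := hZ0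
      have hzv1 : zv.1 1 = x.1 1 + y.1 1 - t := hZ1
      rcases hx with rfl | rfl <;> rcases hy with rfl | rfl
      · apply hkey0
        rw [hzv0, hA0 i, hA0 j]
        have := hcpos i; have := hcpos j
        intro h; linarith
      · apply hkey1
        rw [hzv1, hA1 i, hB1 j, ← ht]
        intro h
        exact hσinj i j hij (by linarith)
      · apply hkey1
        rw [hzv1, hB1 i, hA1 j, ← ht]
        intro h
        exact hσinj i j hij (by linarith)
      · apply hkey0
        rw [hzv0, hB0 i, hB0 j]
        have := hcpos i; have := hcpos j
        intro h; linarith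
    exact ⟨p, zv, hpz, hpx, hpy, hZx, hZy⟩

lemma add_sub_apply (x y z : E2) (k : Fin 2) : (x + y - z) k = x k + y k - z k := by simp

lemma boundary_not_P3 (ε : ℝ) (p : Strip ε) (hp : p.1 1 = 0 ∨ p.1 1 = ε) :
    ¬ P3 ε p := by
  rintro ⟨a, b, hne, hadj, huniq, hmix⟩
  have hmem : ∀ z : Strip ε, 0 ≤ z.1 1 ∧ z.1 1 ≤ ε := fun z => (strip_mem_iff z.1).mp z.2
  -- classification of each pair: horizontal diameter or escaping reflection
  have hclass : ∀ i, ((a i).1 1 = p.1 1 ∧ (b i).1 1 = p.1 1 ∧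
      ((a i).1 0 = p.1 0 + 1 ∨ (a i).1 0 = p.1 0 - 1) ∧
      (b i).1 0 = 2 * p.1 0 - (a i).1 0) ∨
      ¬ (0 ≤ (a i).1 1 + (b i).1 1 - p.1 1 ∧ (a i).1 1 + (b i).1 1 - p.1 1 ≤ ε) := by
    intro i
    have hdA : dist p.1 (a i).1 = 1 := (hadj i).1
    have hdB : dist p.1 (b i).1 = 1 := (hadj i).2
    have hle : dist (a i).1 (b i).1 ≤ 2 := by
      calc dist (a i).1 (b i).1 ≤ dist (a i).1 p.1 + dist p.1 (b i).1 := dist_triangle _ _ _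
        _ = 2 := by rw [dist_comm (a i).1 p.1, hdA, hdB]; norm_num
    rcases lt_or_eq_of_le hle with hlt | heq
    · right
      intro hIcc
      have hco1 : ((a i).1 + (b i).1 - p.1) 1 = (a i).1 1 + (b i).1 1 - p.1 1 :=
        add_sub_apply _ _ _ 1
      have hZmem : ((a i).1 + (b i).1 - p.1) ∈ Strip ε := by
        rw [strip_mem_iff, hco1]; exact hIcc
      set zz : Strip ε := ⟨(a i).1 + (b i).1 - p.1, hZmem⟩ with hzz
      have hz1 : dist zz.1 (a i).1 = 1 := by
        rw [dist_eq_one_iff] at hdB ⊢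
        rw [show zz.1 = (a i).1 + (b i).1 - p.1 from rfl, add_sub_apply, add_sub_apply]
        linear_combination hdB
      have hz2 : dist zz.1 (b i).1 = 1 := by
        rw [dist_eq_one_iff] at hdA ⊢
        rw [show zz.1 = (a i).1 + (b i).1 - p.1 from rfl, add_sub_apply, add_sub_apply]
        linear_combination hdA
      have hzp : zz = p := huniq i zz hz1 hz2
      have e0 : (a i).1 0 + (b i).1 0 - p.1 0 = p.1 0 := by
        have h' : zz.1 0 = p.1 0 := by rw [hzp]
        rwa [show zz.1 = (a i).1 + (b i).1 - p.1 from rfl, add_sub_apply] at h'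
      have e1 : (a i).1 1 + (b i).1 1 - p.1 1 = p.1 1 := by
        have h' : zz.1 1 = p.1 1 := by rw [hzp]
        rwa [show zz.1 = (a i).1 + (b i).1 - p.1 from rfl, add_sub_apply] at h'
      have hb0 : (b i).1 0 = 2 * p.1 0 - (a i).1 0 := by linarith
      have hb1 : (b i).1 1 = 2 * p.1 1 - (a i).1 1 := by linarith
      have hsq : dist (a i).1 (b i).1 ^ 2 < 4 := by nlinarith [dist_nonneg (x := (a i).1) (y := (b i).1)]
      rw [dist_sq, hb0, hb1] at hsq
      rw [dist_eq_one_iff] at hdA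
      nlinarith [hdA]
    · left
      obtain ⟨m0, m1⟩ := tangent_mid heq hdA hdB
      have ha1 : (a i).1 1 = p.1 1 := by
        rcases hp with hpe | hpe
        · have := (hmem (a i)).1; have := (hmem (b i)).1
          rw [hpe] at m1 ⊢; linarith
        · have := (hmem (a i)).2; have := (hmem (b i)).2
          rw [hpe] at m1 ⊢; linarith
      have hb1 : (b i).1 1 = p.1 1 := by
        rcases hp with hpe | hpe
        · have := (hmem (a i)).1; have := (hmem (b i)).1
          rw [hpe] at m1 ⊢; linarith
        · have := (hmem (a i)).2; have := (hmem (b i)).2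
          rw [hpe] at m1 ⊢; linarith
      refine ⟨ha1, hb1, ?_, by linarith⟩
      rw [dist_eq_one_iff, ha1] at hdA
      simp only [sub_self] at hdA
      have hfac : ((a i).1 0 - p.1 0 - 1) * ((a i).1 0 - p.1 0 + 1) = 0 := by
        linear_combination hdA
      rcases mul_eq_zero.mp hfac with h | h
      · left; linarith
      · right; linarith
  -- at most one horizontal diameter pair
  have hHH : ∀ i j, i ≠ j →
      ((a i).1 1 = p.1 1 ∧ (b i).1 1 = p.1 1 ∧
        ((a i).1 0 = p.1 0 + 1 ∨ (a i).1 0 = p.1 0 - 1) ∧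
        (b i).1 0 = 2 * p.1 0 - (a i).1 0) →
      ((a j).1 1 = p.1 1 ∧ (b j).1 1 = p.1 1 ∧
        ((a j).1 0 = p.1 0 + 1 ∨ (a j).1 0 = p.1 0 - 1) ∧
        (b j).1 0 = 2 * p.1 0 - (a j).1 0) → False := by
    rintro i j hij ⟨hai1, hbi1, hai0, hbi0⟩ ⟨haj1, hbj1, haj0, hbj0⟩
    rcases hai0 with h1 | h1 <;> rcases haj0 with h2 | h2
    · exact (hne i j hij).1 (Subtype.ext (pt_ext (by rw [h1, h2]) (by rw [hai1, haj1])))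
    · exact (hne j i (Ne.symm hij)).2.1
        (Subtype.ext (pt_ext (by rw [h2, hbi0, h1]; ring) (by rw [haj1, hbi1])))
    · exact (hne i j hij).2.1
        (Subtype.ext (pt_ext (by rw [h1, hbj0, h2]; ring) (by rw [hai1, hbj1])))
    · exact (hne i j hij).1 (Subtype.ext (pt_ext (by rw [h1, h2]) (by rw [hai1, haj1])))
  -- extract two "cut" pairs
  have hcut : ∃ i j : Fin 3, i ≠ j ∧
      ¬ (0 ≤ (a i).1 1 + (b i).1 1 - p.1 1 ∧ (a i).1 1 + (b i).1 1 - p.1 1 ≤ ε) ∧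
      ¬ (0 ≤ (a j).1 1 + (b j).1 1 - p.1 1 ∧ (a j).1 1 + (b j).1 1 - p.1 1 ≤ ε) := by
    rcases hclass 0 with h0 | c0 <;> rcases hclass 1 with h1 | c1 <;> rcases hclass 2 with h2 | c2
    · exact absurd (hHH 0 1 (by decide) h0 h1) id
    · exact absurd (hHH 0 1 (by decide) h0 h1) id
    · exact absurd (hHH 0 2 (by decide) h0 h2) id
    · exact ⟨1, 2, by decide, c1, c2⟩
    · exact absurd (hHH 1 2 (by decide) h1 h2) id
    · exact ⟨0, 2, by decide, c0, c2⟩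
    · exact ⟨0, 1, by decide, c0, c1⟩
    · exact ⟨0, 1, by decide, c0, c1⟩
  obtain ⟨i, j, hij, ci, cj⟩ := hcut
  -- from the mixed condition, the second common neighbor lies in the strip
  have hother : ∀ x y : Strip ε, x.1 ≠ y.1 → dist p.1 x.1 = 1 → dist p.1 y.1 = 1 →
      (∃ z₁ z₂ : Strip ε, z₁ ≠ z₂ ∧ (stripGraph ε).Adj z₁ x ∧ (stripGraph ε).Adj z₁ y ∧
        (stripGraph ε).Adj z₂ x ∧ (stripGraph ε).Adj z₂ y) →
      0 ≤ x.1 1 + y.1 1 - p.1 1 ∧ x.1 1 + y.1 1 - p.1 1 ≤ ε := by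
    rintro x y hxy hpx hpy ⟨z₁, z₂, hz12, h1, h2, h3, h4⟩
    have h1' : dist z₁.1 x.1 = 1 := h1
    have h2' : dist z₁.1 y.1 = 1 := h2
    have h3' : dist z₂.1 x.1 = 1 := h3
    have h4' : dist z₂.1 y.1 = 1 := h4
    have hz12' : z₁.1 ≠ z₂.1 := fun h => hz12 (Subtype.ext h)
    have key : z₁ = p ∨ z₂ = p := by
      by_contra hcon
      push_neg at hcon
      obtain ⟨k1, k2⟩ := hcon
      have knp1 : z₁.1 ≠ p.1 := fun h => k1 (Subtype.ext h)
      obtain ⟨s0, s1⟩ := two_common hxy hz12' h1' h2' h3' h4'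
      obtain ⟨r0, r1⟩ := two_common hxy knp1 h1' h2' hpx hpy
      exact k2 (Subtype.ext (pt_ext (by linarith) (by linarith)))
    rcases key with rfl | rfl
    · obtain ⟨s0, s1⟩ := two_common hxy hz12' h1' h2' h3' h4'
      have := hmem z₂
      constructor <;> linarith [this.1, this.2]
    · obtain ⟨s0, s1⟩ := two_common hxy hz12' h1' h2' h3' h4'
      have := hmem z₁
      constructor <;> linarith [this.1, this.2]
  have bnd1 := hother (a i) (a j)
    (fun h => (hne i j hij).1 (Subtype.ext h)) (hadj i).1 (hadj j).1
    (hmix i j hij (a i) (a j) (Or.inl rfl) (Or.inl rfl))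
  have bnd2 := hother (b i) (b j)
    (fun h => (hne i j hij).2.2 (Subtype.ext h)) (hadj i).2 (hadj j).2
    (hmix i j hij (b i) (b j) (Or.inr rfl) (Or.inr rfl))
  have hmi := hmem (a i); have hmj := hmem (a j)
  have hmi' := hmem (b i); have hmj' := hmem (b j)
  rcases hp with hpe | hpe
  · rw [hpe] at ci cj bnd1 bnd2
    have hSi : ε < (a i).1 1 + (b i).1 1 := by
      by_contra hh; push_neg at hh
      exact ci ⟨by linarith [hmi.1, hmi'.1], by linarith⟩
    have hSj : ε < (a j).1 1 + (b j).1 1 := by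
      by_contra hh; push_neg at hh
      exact cj ⟨by linarith [hmj.1, hmj'.1], by linarith⟩
    linarith [bnd1.2, bnd2.2]
  · rw [hpe] at ci cj bnd1 bnd2
    have hSi : (a i).1 1 + (b i).1 1 < ε := by
      by_contra hh; push_neg at hh
      exact ci ⟨by linarith, by linarith [hmi.2, hmi'.2]⟩
    have hSj : (a j).1 1 + (b j).1 1 < ε := by
      by_contra hh; push_neg at hh
      exact cj ⟨by linarith, by linarith [hmj.2, hmj'.2]⟩
    linarith [bnd1.1, bnd2.1]

lemma P3_transfer {ε₁ ε₂ : ℝ} (f : stripGraph ε₁ ≃g stripGraph ε₂) (q : Strip ε₂)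
    (h : P3 ε₂ q) : P3 ε₁ (f.symm q) := by
  obtain ⟨a, b, hne, hadj, huniq, hmix⟩ := h
  refine ⟨fun i => f.symm (a i), fun i => f.symm (b i), ?_, ?_, ?_, ?_⟩
  · intro i j hij
    obtain ⟨h1, h2, h3⟩ := hne i j hij
    exact ⟨fun h => h1 (f.symm.injective h), fun h => h2 (f.symm.injective h),
      fun h => h3 (f.symm.injective h)⟩
  · intro i
    exact ⟨f.symm.map_adj_iff.mpr (hadj i).1, f.symm.map_adj_iff.mpr (hadj i).2⟩
  · intro i z hz1 hz2
    have hz1' : (stripGraph ε₂).Adj (f z) (a i) := by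
      have := f.map_adj_iff.mpr hz1
      rwa [RelIso.apply_symm_apply] at this
    have hz2' : (stripGraph ε₂).Adj (f z) (b i) := by
      have := f.map_adj_iff.mpr hz2
      rwa [RelIso.apply_symm_apply] at this
    have := huniq i (f z) hz1' hz2'
    have : f.symm (f z) = f.symm q := by rw [this]
    rwa [RelIso.symm_apply_apply] at this
  · intro i j hij x y hx hy
    have hx' : f x = a i ∨ f x = b i := by
      rcases hx with rfl | rfl
      · exact Or.inl (RelIso.apply_symm_apply _ _)
      · exact Or.inr (RelIso.apply_symm_apply _ _)
    have hy' : f y = a j ∨ f y = b j := by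
      rcases hy with rfl | rfl
      · exact Or.inl (RelIso.apply_symm_apply _ _)
      · exact Or.inr (RelIso.apply_symm_apply _ _)
    obtain ⟨z₁, z₂, hz, h1, h2, h3, h4⟩ := hmix i j hij (f x) (f y) hx' hy'
    refine ⟨f.symm z₁, f.symm z₂, fun h => hz (f.symm.injective h), ?_, ?_, ?_, ?_⟩
    · have := f.symm.map_adj_iff.mpr h1
      rwa [RelIso.symm_apply_apply] at this
    · have := f.symm.map_adj_iff.mpr h2
      rwa [RelIso.symm_apply_apply] at this
    · have := f.symm.map_adj_iff.mpr h3
      rwa [RelIso.symm_apply_apply] at this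
    · have := f.symm.map_adj_iff.mpr h4
      rwa [RelIso.symm_apply_apply] at this

end StripAux

/-- An isomorphism of the unit distance graphs of two strips maps boundary points of the
first strip to boundary points of the second strip. -/
theorem strip_iso_preserves_boundary (ε₁ ε₂ : ℝ) (hε₁ : 0 < ε₁) (hε₂ : 0 < ε₂)
    (f : stripGraph ε₁ ≃g stripGraph ε₂) (y : Strip ε₁)
    (hy : y.1 1 = 0 ∨ y.1 1 = ε₁) :
    (f y).1 1 = 0 ∨ (f y).1 1 = ε₂ := by
  by_contra h
  push_neg at h
  obtain ⟨h1, h2⟩ := h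
  have hmem := (StripAux.strip_mem_iff (f y).1).mp (f y).2
  have hint1 : 0 < (f y).1 1 := lt_of_le_of_ne hmem.1 (Ne.symm h1)
  have hint2 : (f y).1 1 < ε₂ := lt_of_le_of_ne hmem.2 h2
  have hP3 : StripAux.P3 ε₂ (f y) := StripAux.interior_P3 ε₂ (f y) hint1 hint2
  have hP3' : StripAux.P3 ε₁ (f.symm (f y)) := StripAux.P3_transfer f (f y) hP3
  rw [RelIso.symm_apply_apply] at hP3'
  exact StripAux.boundary_not_P3 ε₁ y hy hP3'
end
end

section
/- Let ε₁, ε₂ > 0 and let f be an isomorphism of the unit distance graphs of L₁ = ℝ × [0,ε₁] and L₂ = ℝ × [0,ε₂]. If x, y ∈ L₁ satisfy ||x - y|| = 1, then x and y have equal second coordinates if and only if f(x) and f(y) have equal second coordinates. -/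
noncomputable section

open Real

abbrev E2 := EuclideanSpace ℝ (Fin 2)

def pt (a b : ℝ) : E2 := (WithLp.equiv 2 (Fin 2 → ℝ)).symm ![a, b]
@[simp] lemma pt_0 (a b : ℝ) : pt a b 0 = a := rfl
@[simp] lemma pt_1 (a b : ℝ) : pt a b 1 = b := rfl

lemma dist_coords (x y : E2) : dist x y = √((x 0 - y 0)^2 + (x 1 - y 1)^2) := by
  rw [EuclideanSpace.dist_eq, Fin.sum_univ_two]
  simp [Real.dist_eq, sq_abs]

lemma dist_pt_pt (a b c d : ℝ) : dist (pt a b) (pt c d) = √((a-c)^2 + (b-d)^2) := by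
  rw [dist_coords]; simp

lemma sqrt_aux (a b : ℝ) : |a| ≤ √(a^2 + b^2) := by
  rw [abs_le]
  constructor <;> nlinarith [Real.sq_sqrt (by positivity : (0:ℝ) ≤ a^2 + b^2),
    Real.sqrt_nonneg (a^2 + b^2), sq_nonneg b]

lemma coord0_le_dist (x y : E2) : |x 0 - y 0| ≤ dist x y := by
  rw [dist_coords]; exact sqrt_aux _ _

lemma coord1_le_dist (x y : E2) : |x 1 - y 1| ≤ dist x y := by
  rw [dist_coords]
  calc |x 1 - y 1| ≤ √((x 1 - y 1)^2 + (x 0 - y 0)^2) := sqrt_aux _ _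
  _ = _ := by ring_nf

/-- the key algebra fact: cos of angle bound -/
lemma cos_bound {t b : ℝ} (ht : |t| ≤ 1) (hb : |b| ≤ 1) :
    √(1-t^2) * √(1-b^2) + t*b ≤ 1 - (t-b)^2/2 := by
  have h1 : (0:ℝ) ≤ 1 - t^2 := by nlinarith [abs_le.1 ht]
  have h2 : (0:ℝ) ≤ 1 - b^2 := by nlinarith [abs_le.1 hb]
  have key : √(1-t^2) * √(1-b^2) ≤ 1 - (t^2+b^2)/2 := by
    rw [← Real.sqrt_mul h1]
    have hB : (0:ℝ) ≤ 1 - (t^2+b^2)/2 := by nlinarith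
    rw [show (1-t^2)*(1-b^2) = (1-(t^2+b^2)/2)^2 - ((t^2-b^2)/2)^2 by ring]
    calc √((1-(t^2+b^2)/2)^2 - ((t^2-b^2)/2)^2) ≤ √((1-(t^2+b^2)/2)^2) := by
          apply Real.sqrt_le_sqrt; nlinarith [sq_nonneg ((t^2-b^2)/2)]
    _ = 1 - (t^2+b^2)/2 := Real.sqrt_sq hB
  nlinarith


def ell (ε : ℝ) : ℝ := min 1 ε / 2
def eta (ε : ℝ) : ℝ := (ell ε)^2 / 4

lemma ell_pos {ε : ℝ} (hε : 0 < ε) : 0 < ell ε := by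
  unfold ell; rcases min_cases 1 ε with ⟨h,_⟩|⟨h,_⟩ <;> rw [h] <;> linarith

lemma ell_le_half (ε : ℝ) : ell ε ≤ 1/2 := by
  unfold ell; have := min_le_left 1 ε; linarith

lemma ell_le_eps_half (ε : ℝ) : ell ε ≤ ε/2 := by
  unfold ell; have := min_le_right 1 ε; linarith

lemma eta_pos {ε : ℝ} (hε : 0 < ε) : 0 < eta ε := by
  unfold eta; have := ell_pos hε; positivity

lemma eta_le {ε : ℝ} (hε : 0 < ε) : eta ε ≤ 1/16 := by
  unfold eta
  have h1 := ell_le_half ε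
  have h2 := ell_pos hε
  nlinarith


private lemma le_of_sq_le_sq' {A B : ℝ} (h : A^2 ≤ B^2) (hB : 0 ≤ B) : A ≤ B := by
  nlinarith [sq_nonneg (A - B), sq_nonneg (A + B)]

private lemma arith_eta {E η X : ℝ} (hE : 2 ≤ E) (hη : 0 < η) (hηle : η ≤ 1/16)
    (hX : (E-1)^2 + 4*E*η ≤ X) : (E-1+η)^2 ≤ X := by nlinarith

private lemma one_sub_sq_nonneg {t : ℝ} (ht : |t| ≤ 1) : (0:ℝ) ≤ 1 - t^2 := by
  obtain ⟨l, r⟩ := abs_le.1 ht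
  nlinarith

set_option maxHeartbeats 1000000 in
lemma step_lemma {ε : ℝ} (hε : 0 < ε) (u v : E2)
    (hu0 : 0 ≤ u 1) (hu1 : u 1 ≤ ε) (hv0 : 0 ≤ v 1) (hv1 : v 1 ≤ ε)
    (hE : 2 ≤ dist u v) {T : ℝ} (hT1 : dist u v - 1 ≤ T) (hT2 : T ≤ dist u v - 1 + eta ε) :
    ∃ u' : E2, (0 ≤ u' 1 ∧ u' 1 ≤ ε) ∧ dist u u' = 1 ∧ dist u' v = T := by
  have hl := ell_pos hε
  have hlh := ell_le_half ε
  have hle := ell_le_eps_half ε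
  have hetapos := eta_pos hε
  have hetale := eta_le hε
  obtain ⟨E, hEdef⟩ : ∃ E, E = dist u v := ⟨_, rfl⟩
  obtain ⟨p, hpdef⟩ : ∃ p, p = v 0 - u 0 := ⟨_, rfl⟩
  obtain ⟨q, hqdef⟩ : ∃ q, q = v 1 - u 1 := ⟨_, rfl⟩
  rw [← hEdef] at hE hT1 hT2
  have hEpos : (0:ℝ) < E := by linarith
  have hE2 : E^2 = p^2 + q^2 := by
    rw [hEdef, dist_coords, Real.sq_sqrt (by positivity), hpdef, hqdef]; ring
  obtain ⟨b, hbdef⟩ : ∃ b, b = q / E := ⟨_, rfl⟩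
  have hqE : |q| ≤ E := by
    have := coord1_le_dist u v
    rw [← hEdef] at this
    rwa [show |u 1 - v 1| = |q| by rw [hqdef, abs_sub_comm]] at this
  have hb1 : |b| ≤ 1 := by
    rw [hbdef, abs_div, abs_of_pos hEpos]
    exact div_le_one_of_le₀ hqE (le_of_lt hEpos)
  obtain ⟨σ, hσdef⟩ : ∃ σ : ℝ, σ = if 0 ≤ p then (1:ℝ) else -1 := ⟨_, rfl⟩
  have hσ2 : σ^2 = 1 := by rw [hσdef]; split <;> norm_num
  have hσp : σ * p = |p| := by
    rw [hσdef]; split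
    · rw [abs_of_nonneg ‹_›]; ring
    · rw [abs_of_neg (by linarith [not_le.mp ‹¬ 0 ≤ p›])]; ring
  have hpE : |p| = E * √(1 - b^2) := by
    have h1 : (1 - b^2) = p^2/E^2 := by
      rw [hbdef]; field_simp; linarith [hE2]
    rw [h1, Real.sqrt_div (sq_nonneg p), Real.sqrt_sq_eq_abs,
      Real.sqrt_sq (le_of_lt hEpos)]
    field_simp
  obtain ⟨g, hgdef⟩ : ∃ g : ℝ → ℝ, g = fun t => √((p - σ*√(1-t^2))^2 + (q - t)^2) := ⟨_, rfl⟩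
  have hgapp : ∀ t, g t = √((p - σ*√(1-t^2))^2 + (q - t)^2) := fun t => by rw [hgdef]
  have hgcont : Continuous g := by
    rw [hgdef]
    apply Real.continuous_sqrt.comp
    fun_prop
  have hb2 : √(1 - b^2) = |p|/E := by rw [hpE]; field_simp
  have hσabs : σ * |p| = p := by
    calc σ * |p| = σ^2 * p := by rw [← hσp]; ring
    _ = p := by rw [hσ2]; ring
  have hgb : g b = E - 1 := by
    have h1 : σ * √(1 - b^2) = p / E := by
      rw [hb2, show σ * (|p|/E) = (σ * |p|)/E from by ring, hσabs]
    have h2 : (p - σ*√(1-b^2))^2 + (q - b)^2 = (E-1)^2 := by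
      rw [h1, hbdef]
      have e : (p - p/E)^2 + (q - q/E)^2 = (p^2+q^2) * ((E-1)^2/E^2) := by
        field_simp
      rw [e, ← hE2]
      field_simp
    rw [hgapp, h2, Real.sqrt_sq (by linarith)]
  have hub : 0 ≤ u 1 + b ∧ u 1 + b ≤ ε := by
    have hb' : u 1 + b = ((E-1)*(u 1) + v 1)/E := by
      rw [hbdef, hqdef]; field_simp; ring
    have hm1 : (0:ℝ) ≤ (E-1) * u 1 := mul_nonneg (by linarith) hu0
    have hm2 : (E-1) * u 1 ≤ (E-1) * ε := mul_le_mul_of_nonneg_left hu1 (by linarith)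
    constructor
    · rw [hb']; apply div_nonneg _ (le_of_lt hEpos); linarith
    · rw [hb', div_le_iff₀ hEpos]; linarith
  obtain ⟨τ, hτabs, hτsafe⟩ :
      ∃ τ : ℝ, |τ| = ell ε ∧ ∀ t ∈ Set.uIcc b (b+τ), |t| ≤ 1 ∧ 0 ≤ u 1 + t ∧ u 1 + t ≤ ε := by
    have hbabs := abs_le.1 hb1
    rcases le_or_gt (|b|) (1/2) with hcase | hcase
    · have hb' := abs_le.1 hcase
      rcases le_or_gt (u 1 + b) (ε/2) with hc2 | hc2
      · refine ⟨ell ε, abs_of_pos hl, fun t ht => ?_⟩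
        rw [Set.uIcc_of_le (by linarith)] at ht
        obtain ⟨h1, h2⟩ := ht
        exact ⟨abs_le.2 ⟨by linarith, by linarith⟩, by linarith [hub.1], by linarith⟩
      · refine ⟨-(ell ε), by rw [abs_neg]; exact abs_of_pos hl, fun t ht => ?_⟩
        rw [Set.uIcc_of_ge (by linarith)] at ht
        obtain ⟨h1, h2⟩ := ht
        exact ⟨abs_le.2 ⟨by linarith, by linarith⟩, by linarith, by linarith [hub.2]⟩
    · rcases lt_or_ge b 0 with hneg | hpos
      · have hblt : b < -(1/2) := by
          rw [abs_of_neg hneg] at hcase; linarith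
        refine ⟨ell ε, abs_of_pos hl, fun t ht => ?_⟩
        rw [Set.uIcc_of_le (by linarith)] at ht
        obtain ⟨h1, h2⟩ := ht
        exact ⟨abs_le.2 ⟨by linarith, by linarith⟩, by linarith [hub.1], by linarith⟩
      · have hbgt : (1:ℝ)/2 < b := by
          rw [abs_of_nonneg hpos] at hcase; linarith
        refine ⟨-(ell ε), by rw [abs_neg]; exact abs_of_pos hl, fun t ht => ?_⟩
        rw [Set.uIcc_of_ge (by linarith)] at ht
        obtain ⟨h1, h2⟩ := ht
        exact ⟨abs_le.2 ⟨by linarith, by linarith⟩, by linarith, by linarith [hub.2]⟩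
  obtain ⟨t₁, ht₁def⟩ : ∃ t₁, t₁ = b + τ := ⟨_, rfl⟩
  obtain ⟨ht₁abs, ht₁0, ht₁ε⟩ := hτsafe t₁ (ht₁def ▸ Set.right_mem_uIcc)
  have hτsq : τ^2 = (ell ε)^2 := by rw [← sq_abs, hτabs]
  have hc1 : (0:ℝ) ≤ 1 - t₁^2 := one_sub_sq_nonneg ht₁abs
  have hgt₁ : E - 1 + eta ε ≤ g t₁ := by
    have e1 : (g t₁)^2 = (p - σ*√(1-t₁^2))^2 + (q-t₁)^2 := by
      rw [hgapp]
      exact Real.sq_sqrt (by positivity)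
    have e2 : (√(1-t₁^2))^2 = 1-t₁^2 := Real.sq_sqrt hc1
    have key : σ*p*√(1-t₁^2) + q*t₁ ≤ E*(1 - (ell ε)^2/2) := by
      have hcb := cos_bound ht₁abs hb1
      have e3 : σ*p*√(1-t₁^2) = E * (√(1-b^2) * √(1-t₁^2)) := by
        rw [hσp, hpE]; ring
      have e4 : q = E * b := by rw [hbdef]; field_simp
      have e5 : (t₁ - b)^2 = (ell ε)^2 := by rw [ht₁def, show b + τ - b = τ from by ring, hτsq]
      rw [e3, e4]
      calc E * (√(1-b^2) * √(1-t₁^2)) + E * b * t₁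
          = E * (√(1-t₁^2) * √(1-b^2) + t₁*b) := by ring
      _ ≤ E * (1 - (t₁-b)^2/2) := by
          apply mul_le_mul_of_nonneg_left _ (le_of_lt hEpos)
          linarith [hcb]
      _ = E * (1 - (ell ε)^2/2) := by rw [e5]
    have expand : (p - σ*√(1-t₁^2))^2 + (q - t₁)^2
        = E^2 + σ^2*(√(1-t₁^2))^2 + t₁^2 - 2*(σ*p*√(1-t₁^2) + q*t₁) := by
      linear_combination (-1 : ℝ) * hE2
    have h7 : (g t₁)^2 ≥ (E-1)^2 + E * (ell ε)^2 := by
      rw [e1, expand, hσ2, e2]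
      have h7a : E^2 + 1*(1 - t₁^2) + t₁^2 - 2*(σ*p*√(1-t₁^2) + q*t₁)
          ≥ E^2 + 1 - 2*(E*(1 - (ell ε)^2/2)) := by linarith [key]
      have h7b : E^2 + 1 - 2*(E*(1 - (ell ε)^2/2)) = (E-1)^2 + E*(ell ε)^2 := by ring
      linarith [h7a, h7b.symm.le]
    have e6 : (E - 1 + eta ε)^2 ≤ (g t₁)^2 := by
      apply arith_eta hE hetapos hetale
      have heta4 : E * (ell ε)^2 = 4 * E * eta ε := by rw [eta]; ring
      linarith [h7, heta4.symm.le]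
    have h9 : 0 ≤ g t₁ := by rw [hgapp]; positivity
    exact le_of_sq_le_sq' e6 h9
  have hsub : Set.uIcc (g b) (g t₁) ⊆ g '' Set.uIcc b t₁ :=
    intermediate_value_uIcc hgcont.continuousOn
  have hTmem : T ∈ Set.uIcc (g b) (g t₁) := by
    rw [Set.mem_uIcc]; left
    exact ⟨by rw [hgb]; linarith, by linarith⟩
  obtain ⟨t, htmem, hgt⟩ := hsub hTmem
  rw [ht₁def] at htmem
  obtain ⟨ht1, hts0, hts1⟩ := hτsafe t htmem
  refine ⟨pt (u 0 + σ*√(1-t^2)) (u 1 + t), ⟨hts0, hts1⟩, ?_, ?_⟩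
  · rw [dist_coords]
    simp only [pt_0, pt_1]
    have h1 : (0:ℝ) ≤ 1 - t^2 := one_sub_sq_nonneg ht1
    have h2 : (√(1-t^2))^2 = 1 - t^2 := Real.sq_sqrt h1
    have h3 : (u 0 - (u 0 + σ*√(1-t^2)))^2 + (u 1 - (u 1 + t))^2 = 1 := by
      linear_combination (√(1-t^2))^2 * hσ2 + h2
    rw [h3, Real.sqrt_one]
  · rw [← hgt, hgapp, dist_coords]
    simp only [pt_0, pt_1]
    congr 1
    rw [hpdef, hqdef]
    ring

lemma strip_mem {ε : ℝ} {p : E2} (h : p ∈ Strip ε) : 0 ≤ p 1 ∧ p 1 ≤ ε := h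

lemma strip_mem' {ε : ℝ} {p : E2} (h0 : 0 ≤ p 1) (h1 : p 1 ≤ ε) : p ∈ Strip ε := ⟨h0, h1⟩

lemma stripGraph_adj {ε : ℝ} {x y : Strip ε} : (stripGraph ε).Adj x y ↔ dist x.1 y.1 = 1 :=
  Iff.rfl

private lemma convex_height {E u1 v1 ε : ℝ} (hE : 1 ≤ E) (h0 : 0 ≤ u1) (h1 : u1 ≤ ε)
    (h2 : 0 ≤ v1) (h3 : v1 ≤ ε) : 0 ≤ u1 + (v1 - u1)/E ∧ u1 + (v1-u1)/E ≤ ε := by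
  have hEpos : (0:ℝ) < E := by linarith
  have he : u1 + (v1 - u1)/E = ((E-1)*u1 + v1)/E := by field_simp; ring
  have hm1 : (0:ℝ) ≤ (E-1) * u1 := mul_nonneg (by linarith) h0
  have hm2 : (E-1) * u1 ≤ (E-1) * ε := mul_le_mul_of_nonneg_left h1 (by linarith)
  constructor
  · rw [he]; apply div_nonneg _ (le_of_lt hEpos); linarith
  · rw [he, div_le_iff₀ hEpos]; linarith

/-- coordinates of the straight unit step -/
private lemma straight_step {ε : ℝ} {u v : E2} (hu : u ∈ Strip ε) (hv : v ∈ Strip ε)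
    {E : ℝ} (hEdef : E = dist u v) (hE1 : 1 ≤ E) :
    ∃ u' : E2, u' ∈ Strip ε ∧ dist u u' = 1 ∧ dist u' v = E - 1 := by
  have hEpos : (0:ℝ) < E := by linarith
  refine ⟨pt (u 0 + (v 0 - u 0)/E) (u 1 + (v 1 - u 1)/E), ?_, ?_, ?_⟩
  · exact strip_mem' (convex_height hE1 (strip_mem hu).1 (strip_mem hu).2
      (strip_mem hv).1 (strip_mem hv).2).1 (convex_height hE1 (strip_mem hu).1
      (strip_mem hu).2 (strip_mem hv).1 (strip_mem hv).2).2
  · rw [dist_coords]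
    simp only [pt_0, pt_1]
    have h1 : (u 0 - (u 0 + (v 0 - u 0)/E))^2 + (u 1 - (u 1 + (v 1 - u 1)/E))^2
        = ((u 0 - v 0)^2 + (u 1 - v 1)^2) / E^2 := by field_simp; ring
    rw [h1]
    have h2 : (u 0 - v 0)^2 + (u 1 - v 1)^2 = E^2 := by
      rw [hEdef, dist_coords, Real.sq_sqrt (by positivity)]
    rw [h2]
    rw [div_self (by positivity), Real.sqrt_one]
  · rw [dist_coords]
    simp only [pt_0, pt_1]
    have h1 : (u 0 + (v 0 - u 0)/E - v 0)^2 + (u 1 + (v 1 - u 1)/E - v 1)^2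
        = ((u 0 - v 0)^2 + (u 1 - v 1)^2) * ((E-1)^2/E^2) := by field_simp; ring
    rw [h1]
    have h2 : (u 0 - v 0)^2 + (u 1 - v 1)^2 = E^2 := by
      rw [hEdef, dist_coords, Real.sq_sqrt (by positivity)]
    rw [h2]
    have h3 : E^2 * ((E-1)^2/E^2) = (E-1)^2 := by field_simp
    rw [h3, Real.sqrt_sq (by linarith)]

set_option maxHeartbeats 1000000 in
/-- main walk construction -/
lemma reach_aux {ε : ℝ} (hε : 0 < ε) : ∀ (m : ℕ) (u v : Strip ε),
    (dist u.1 v.1 = m ∨ (0 < (m:ℝ) - dist u.1 v.1 ∧ (m:ℝ) - dist u.1 v.1 ≤ 1 ∧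
      (m:ℝ) - dist u.1 v.1 ≤ eta ε * ((m:ℝ) - 3))) →
    ∃ w : (stripGraph ε).Walk u v, w.length = m := by
  have hetapos := eta_pos hε
  have hetale := eta_le hε
  intro m
  induction m with
  | zero =>
    intro u v h
    rcases h with h | ⟨h1, h2, h3⟩
    · have : u.1 = v.1 := by
        rw [← dist_eq_zero (x := u.1) (y := v.1)]
        rw [h]; norm_num
      have huv : u = v := Subtype.ext this
      subst huv
      exact ⟨SimpleGraph.Walk.nil, rfl⟩
    · exfalso
      have h5 : eta ε * ((0:ℕ):ℝ) - 3 < 0 := by norm_num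
      have h6 : eta ε * (((0:ℕ):ℝ) - 3) < 0 := by
        push_cast; nlinarith
      linarith
  | succ m ih =>
    intro u v h
    rcases h with h | ⟨h1, h2, h3⟩
    · -- straight
      have hE1 : (1:ℝ) ≤ dist u.1 v.1 := by
        rw [h]
        have : ((1:ℕ):ℝ) ≤ ((m+1 : ℕ):ℝ) := by exact_mod_cast Nat.succ_le_succ (Nat.zero_le m)
        exact_mod_cast this
      obtain ⟨u', hu'1, hu'2, hu'3⟩ := straight_step u.2 v.2 rfl hE1
      have hadj : (stripGraph ε).Adj u ⟨u', hu'1⟩ := hu'2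
      have hnext : dist (⟨u', hu'1⟩ : Strip ε).1 v.1 = (m:ℝ) := by
        simp only
        rw [hu'3, h]; push_cast; ring
      obtain ⟨w, hw⟩ := ih ⟨u', hu'1⟩ v (Or.inl hnext)
      exact ⟨SimpleGraph.Walk.cons hadj w, by simp [hw]⟩
    · -- with slack
      push_cast at h1 h2 h3
      have hm3 : (3:ℝ) ≤ (m:ℝ) := by
        have h5 : (0:ℝ) < eta ε * ((m:ℝ) + 1 - 3) := by linarith
        have h6 : (0:ℝ) < (m:ℝ) - 2 := by
          by_contra hc
          push_neg at hc
          have : eta ε * ((m:ℝ) + 1 - 3) ≤ 0 := by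
            apply mul_nonpos_of_nonneg_of_nonpos (le_of_lt hetapos); linarith
          linarith
        have h7 : (2:ℝ) < (m:ℝ) := by linarith
        have h8 : 2 < m := by exact_mod_cast h7
        exact_mod_cast h8
      have hE2 : 2 ≤ dist u.1 v.1 := by linarith
      obtain ⟨β, hβdef⟩ : ∃ β : ℝ, β = ((m:ℝ)+1) - dist u.1 v.1 := ⟨_, rfl⟩
      have hβpos : 0 < β := by rw [hβdef]; linarith
      have hβ1 : β ≤ 1 := by rw [hβdef]; linarith
      have hβ3 : β ≤ eta ε * ((m:ℝ) - 2) := by rw [hβdef]; linarith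
      obtain ⟨T, hTdef⟩ : ∃ T : ℝ, T = (m:ℝ) - max 0 (β - eta ε) := ⟨_, rfl⟩
      have hT1 : dist u.1 v.1 - 1 ≤ T := by
        rw [hTdef]
        rcases le_or_gt β (eta ε) with hc | hc
        · rw [max_eq_left (by linarith)]; rw [hβdef] at hβpos; linarith
        · rw [max_eq_right (by linarith)]; rw [hβdef] at hc; linarith
      have hT2 : T ≤ dist u.1 v.1 - 1 + eta ε := by
        rw [hTdef]
        rcases le_or_gt β (eta ε) with hc | hc
        · rw [max_eq_left (by linarith)]; rw [hβdef] at hc; linarith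
        · rw [max_eq_right (by linarith)]; rw [hβdef] at hβ1; linarith
      obtain ⟨u', hu'mem, hu'2, hu'3⟩ := step_lemma hε u.1 v.1 (strip_mem u.2).1
        (strip_mem u.2).2 (strip_mem v.2).1 (strip_mem v.2).2 hE2 hT1 hT2
      have hadj : (stripGraph ε).Adj u ⟨u', strip_mem' hu'mem.1 hu'mem.2⟩ := hu'2
      have hrec : ∃ w : (stripGraph ε).Walk (⟨u', strip_mem' hu'mem.1 hu'mem.2⟩ : Strip ε) v,
          w.length = m := by
        apply ih
        rcases le_or_gt β (eta ε) with hc | hc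
        · left
          show dist u' v.1 = (m:ℝ)
          rw [hu'3, hTdef, max_eq_left (by linarith)]
          ring
        · right
          have hd : dist u' v.1 = T := hu'3
          rw [hd, hTdef, max_eq_right (by linarith)]
          refine ⟨by linarith, by linarith [hetapos], ?_⟩
          have he : (m:ℝ) - ((m:ℝ) - (β - eta ε)) = β - eta ε := by ring
          rw [he]
          linarith [hβ3]
      obtain ⟨w, hw⟩ := hrec
      exact ⟨SimpleGraph.Walk.cons hadj w, by simp [hw]⟩

lemma walk_ge {ε : ℝ} {u v : Strip ε} (w : (stripGraph ε).Walk u v) :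
    dist u.1 v.1 ≤ (w.length : ℝ) := by
  induction w with
  | nil => simp
  | @cons a b c hadj p ih =>
    have h1 : dist a.1 b.1 = 1 := hadj
    calc dist a.1 c.1 ≤ dist a.1 b.1 + dist b.1 c.1 := dist_triangle _ _ _
    _ ≤ 1 + p.length := by rw [h1]; linarith
    _ = ((SimpleGraph.Walk.cons hadj p).length : ℝ) := by
        rw [SimpleGraph.Walk.length_cons]; push_cast; ring

/-- for far pairs, graph distance is the ceiling of Euclidean distance -/
lemma dist_formula {ε : ℝ} (hε : 0 < ε) (u v : Strip ε)
    (h : 4 + 1/eta ε ≤ dist u.1 v.1) :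
    (stripGraph ε).dist u v = ⌈dist u.1 v.1⌉₊ := by
  have hetapos := eta_pos hε
  have hE0 : (0:ℝ) < dist u.1 v.1 := by
    have : (0:ℝ) < 1/eta ε := by positivity
    linarith
  have hceil1 : dist u.1 v.1 ≤ (⌈dist u.1 v.1⌉₊ : ℝ) := Nat.le_ceil _
  have hceil2 : (⌈dist u.1 v.1⌉₊ : ℝ) < dist u.1 v.1 + 1 :=
    Nat.ceil_lt_add_one (le_of_lt hE0)
  have hwalk : ∃ w : (stripGraph ε).Walk u v, w.length = ⌈dist u.1 v.1⌉₊ := by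
    apply reach_aux hε
    rcases eq_or_lt_of_le hceil1 with heq | hlt
    · left; exact heq
    · right
      refine ⟨by linarith, by linarith, ?_⟩
      have h1 : (1:ℝ) ≤ eta ε * ((⌈dist u.1 v.1⌉₊ : ℝ) - 3) := by
        have h2 : (1:ℝ)/eta ε ≤ (⌈dist u.1 v.1⌉₊ : ℝ) - 3 := by linarith
        have h3 := mul_le_mul_of_nonneg_left h2 (le_of_lt hetapos)
        rwa [mul_one_div, div_self (ne_of_gt hetapos)] at h3
      linarith
  obtain ⟨w, hw⟩ := hwalk
  apply le_antisymm
  · calc (stripGraph ε).dist u v ≤ w.length := SimpleGraph.dist_le w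
    _ = _ := hw
  · rw [Nat.ceil_le]
    obtain ⟨w', hw'⟩ := (w.reachable).exists_walk_length_eq_dist
    calc dist u.1 v.1 ≤ (w'.length : ℝ) := walk_ge w'
    _ = _ := by rw [hw']

private lemma sqrt_add_le {a b : ℝ} (ha : 0 ≤ a) (hb : 0 ≤ b) : √(a^2 + b^2) ≤ a + b := by
  rw [show a^2 + b^2 = (a+b)^2 - 2*(a*b) from by ring]
  calc √((a+b)^2 - 2*(a*b)) ≤ √((a+b)^2) := by
        apply Real.sqrt_le_sqrt; nlinarith [mul_nonneg ha hb]
  _ = a + b := Real.sqrt_sq (by linarith)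

/-- every pair is connected, with an affine bound on graph distance -/
lemma dist_global {ε : ℝ} (hε : 0 < ε) (u v : Strip ε) :
    (stripGraph ε).Reachable u v ∧
    ((stripGraph ε).dist u v : ℝ) ≤ 2*dist u.1 v.1 + 2*(5 + 1/eta ε) + 2*ε + 2 := by
  have hetapos := eta_pos hε
  obtain ⟨R, hRdef⟩ : ∃ R : ℝ, R = 5 + 1/eta ε := ⟨_, rfl⟩
  have hR4 : 4 + 1/eta ε ≤ R := by rw [hRdef]; linarith
  have hRpos : 0 < R := by rw [hRdef]; positivity
  obtain ⟨wm, hwm⟩ : ∃ wm : Strip ε, wm.1 = pt (max (u.1 0) (v.1 0) + R) 0 :=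
    ⟨⟨pt (max (u.1 0) (v.1 0) + R) 0, strip_mem' (by simp) (by simp; linarith)⟩, rfl⟩
  -- distances to the waypoint
  have hu1 := strip_mem u.2
  have hv1 := strip_mem v.2
  have hDu : dist u.1 wm.1 = √((max (u.1 0) (v.1 0) + R - u.1 0)^2 + (u.1 1)^2) := by
    rw [dist_coords, hwm]
    simp only [pt_0, pt_1]
    congr 1
    ring
  have hDv : dist v.1 wm.1 = √((max (u.1 0) (v.1 0) + R - v.1 0)^2 + (v.1 1)^2) := by
    rw [dist_coords, hwm]
    simp only [pt_0, pt_1]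
    congr 1
    ring
  have hgapu : R ≤ max (u.1 0) (v.1 0) + R - u.1 0 := by
    have := le_max_left (u.1 0) (v.1 0); linarith
  have hgapv : R ≤ max (u.1 0) (v.1 0) + R - v.1 0 := by
    have := le_max_right (u.1 0) (v.1 0); linarith
  have hDu1 : R ≤ dist u.1 wm.1 := by
    rw [hDu]
    calc R ≤ max (u.1 0) (v.1 0) + R - u.1 0 := hgapu
    _ = √((max (u.1 0) (v.1 0) + R - u.1 0)^2) := (Real.sqrt_sq (by linarith)).symm
    _ ≤ _ := by apply Real.sqrt_le_sqrt; nlinarith [sq_nonneg (u.1 1)]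
  have hDv1 : R ≤ dist v.1 wm.1 := by
    rw [hDv]
    calc R ≤ max (u.1 0) (v.1 0) + R - v.1 0 := hgapv
    _ = √((max (u.1 0) (v.1 0) + R - v.1 0)^2) := (Real.sqrt_sq (by linarith)).symm
    _ ≤ _ := by apply Real.sqrt_le_sqrt; nlinarith [sq_nonneg (v.1 1)]
  -- upper bounds
  have habs : |u.1 0 - v.1 0| ≤ dist u.1 v.1 := coord0_le_dist u.1 v.1
  obtain ⟨ha1, ha2⟩ := abs_le.1 habs
  have hdn : (0:ℝ) ≤ dist u.1 v.1 := dist_nonneg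
  have hmaxu : max (u.1 0) (v.1 0) - u.1 0 ≤ dist u.1 v.1 := by
    rcases max_cases (u.1 0) (v.1 0) with ⟨h1, h2⟩ | ⟨h1, h2⟩ <;> rw [h1] <;> linarith
  have hmaxv : max (u.1 0) (v.1 0) - v.1 0 ≤ dist u.1 v.1 := by
    rcases max_cases (u.1 0) (v.1 0) with ⟨h1, h2⟩ | ⟨h1, h2⟩ <;> rw [h1] <;> linarith
  have hDu2 : dist u.1 wm.1 ≤ dist u.1 v.1 + R + ε := by
    rw [hDu]
    calc √((max (u.1 0) (v.1 0) + R - u.1 0)^2 + (u.1 1)^2)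
        ≤ (max (u.1 0) (v.1 0) + R - u.1 0) + u.1 1 := sqrt_add_le (by linarith) hu1.1
    _ ≤ _ := by linarith [hu1.2]
  have hDv2 : dist v.1 wm.1 ≤ dist u.1 v.1 + R + ε := by
    rw [hDv]
    calc √((max (u.1 0) (v.1 0) + R - v.1 0)^2 + (v.1 1)^2)
        ≤ (max (u.1 0) (v.1 0) + R - v.1 0) + v.1 1 := sqrt_add_le (by linarith) hv1.1
    _ ≤ _ := by linarith [hv1.2]
  -- construct walks
  have hw1 : ∃ w : (stripGraph ε).Walk u wm, w.length = ⌈dist u.1 wm.1⌉₊ := by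
    apply reach_aux hε
    rcases eq_or_lt_of_le (Nat.le_ceil (dist u.1 wm.1)) with heq | hlt
    · left; exact heq
    · right
      have hc2 : (⌈dist u.1 wm.1⌉₊ : ℝ) < dist u.1 wm.1 + 1 :=
        Nat.ceil_lt_add_one (by linarith)
      refine ⟨by linarith, by linarith, ?_⟩
      have h2 : (1:ℝ)/eta ε ≤ (⌈dist u.1 wm.1⌉₊ : ℝ) - 3 := by
        have := Nat.le_ceil (dist u.1 wm.1); rw [hRdef] at hDu1; linarith
      have h3 := mul_le_mul_of_nonneg_left h2 (le_of_lt hetapos)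
      rw [mul_one_div, div_self (ne_of_gt hetapos)] at h3
      linarith
  have hw2 : ∃ w : (stripGraph ε).Walk wm v, w.length = ⌈dist wm.1 v.1⌉₊ := by
    apply reach_aux hε
    rw [dist_comm]
    rcases eq_or_lt_of_le (Nat.le_ceil (dist v.1 wm.1)) with heq | hlt
    · left; exact heq
    · right
      have hc2 : (⌈dist v.1 wm.1⌉₊ : ℝ) < dist v.1 wm.1 + 1 :=
        Nat.ceil_lt_add_one (by linarith)
      refine ⟨by linarith, by linarith, ?_⟩
      have h2 : (1:ℝ)/eta ε ≤ (⌈dist v.1 wm.1⌉₊ : ℝ) - 3 := by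
        have := Nat.le_ceil (dist v.1 wm.1); rw [hRdef] at hDv1; linarith
      have h3 := mul_le_mul_of_nonneg_left h2 (le_of_lt hetapos)
      rw [mul_one_div, div_self (ne_of_gt hetapos)] at h3
      linarith
  obtain ⟨w1, hw1l⟩ := hw1
  obtain ⟨w2, hw2l⟩ := hw2
  refine ⟨(w1.append w2).reachable, ?_⟩
  have hd := SimpleGraph.dist_le (w1.append w2)
  rw [SimpleGraph.Walk.length_append, hw1l, hw2l] at hd
  have hd' : ((stripGraph ε).dist u v : ℝ) ≤ (⌈dist u.1 wm.1⌉₊ : ℝ) + (⌈dist wm.1 v.1⌉₊ : ℝ) := by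
    exact_mod_cast hd
  have hcu : (⌈dist u.1 wm.1⌉₊ : ℝ) < dist u.1 wm.1 + 1 := Nat.ceil_lt_add_one (by linarith)
  have hcomm : dist wm.1 v.1 = dist v.1 wm.1 := dist_comm _ _
  have hcv : (⌈dist wm.1 v.1⌉₊ : ℝ) < dist v.1 wm.1 + 1 := by
    rw [hcomm]; exact Nat.ceil_lt_add_one (by linarith)
  rw [hRdef] at hDu2 hDv2
  linarith

/-- the graph-theoretic tiltedness witness: an equidistant geodesic ray -/
def TiltW {ε : ℝ} (x y : Strip ε) : Prop :=
  ∃ (u : ℕ → Strip ε) (n₀ : ℕ), (∀ k, (stripGraph ε).Adj (u k) (u (k+1))) ∧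
    (∀ k, (stripGraph ε).dist x (u k) = n₀ + k ∧ (stripGraph ε).dist y (u k) = n₀ + k)

set_option maxHeartbeats 1000000 in
private lemma window_dist {ε : ℝ} (hε : 0 < ε) (z p : Strip ε)
    {S w0 w1 s : ℝ} (hs : s = 1 ∨ s = -1) (hw : w0^2 + w1^2 = 1) (hw0 : |w0| < 1)
    (hS : 4 + 1/eta ε + 1/2 ≤ S)
    (h0 : p.1 0 - z.1 0 = S + s*w0/2) (h1 : p.1 1 - z.1 1 = s*w1/2)
    {n : ℕ} (hn : (n:ℝ) = S + 1/2) :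
    (stripGraph ε).dist z p = n := by
  have hetapos := eta_pos hε
  have hs2 : s^2 = 1 := by rcases hs with h|h <;> rw [h] <;> norm_num
  have hSpos : (0:ℝ) < S := by
    have : (0:ℝ) < 1/eta ε := by positivity
    linarith
  have hw0' := abs_lt.1 hw0
  have hsw0 : |s*w0| < 1 := by
    rw [abs_mul]
    rcases hs with h|h <;> rw [h] <;> simp <;> exact hw0
  have hsw0' := abs_lt.1 hsw0
  have hE2 : (dist z.1 p.1)^2 = S^2 + s*S*w0 + 1/4 := by
    rw [dist_coords, Real.sq_sqrt (by positivity)]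
    have e0 : z.1 0 - p.1 0 = -(S + s*w0/2) := by linarith
    have e1 : z.1 1 - p.1 1 = -(s*w1/2) := by linarith
    rw [e0, e1]
    nlinarith [hs2, hw]
  have hEnn : (0:ℝ) ≤ dist z.1 p.1 := dist_nonneg
  have hupper : dist z.1 p.1 ≤ S + 1/2 := by
    have h2 : (dist z.1 p.1)^2 ≤ (S + 1/2)^2 := by
      rw [hE2]
      have : s * S * w0 ≤ S := by
        calc s * S * w0 = S * (s * w0) := by ring
        _ ≤ S * 1 := mul_le_mul_of_nonneg_left (by linarith) (le_of_lt hSpos)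
        _ = S := by ring
      nlinarith
    exact le_of_sq_le_sq' h2 (by linarith)
  have hlower : S - 1/2 < dist z.1 p.1 := by
    have h2 : (S - 1/2)^2 < (dist z.1 p.1)^2 := by
      rw [hE2]
      have : -S < s * S * w0 := by
        have h3 : S * (-1) < S * (s * w0) := by
          apply mul_lt_mul_of_pos_left _ hSpos
          linarith
        calc -S = S * (-1) := by ring
        _ < S * (s * w0) := h3
        _ = s * S * w0 := by ring
      nlinarith
    by_contra hc
    push_neg at hc
    have h4 : (dist z.1 p.1)^2 ≤ (S - 1/2)^2 := by nlinarith
    linarith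
  have hfar : 4 + 1/eta ε ≤ dist z.1 p.1 := by linarith
  rw [dist_formula hε z p hfar]
  have hn0 : n ≠ 0 := by
    intro hc
    rw [hc] at hn
    push_cast at hn
    linarith
  rw [Nat.ceil_eq_iff hn0]
  constructor
  · have : ((n-1 : ℕ):ℝ) = S - 1/2 := by
      have h5 : 1 ≤ n := Nat.one_le_iff_ne_zero.mpr hn0
      push_cast [h5]
      linarith
    rw [this]; exact hlower
  · rw [hn]; exact hupper

set_option maxHeartbeats 1000000 in
lemma tilt_of_tilted {ε : ℝ} (hε : 0 < ε) (x y : Strip ε)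
    (hxy : dist x.1 y.1 = 1) (hne : x.1 1 ≠ y.1 1) : TiltW x y := by
  have hetapos := eta_pos hε
  obtain ⟨w0, hw0⟩ : ∃ w0 : ℝ, w0 = y.1 0 - x.1 0 := ⟨_, rfl⟩
  obtain ⟨w1, hw1⟩ : ∃ w1 : ℝ, w1 = y.1 1 - x.1 1 := ⟨_, rfl⟩
  have hw1ne : w1 ≠ 0 := by rw [hw1]; intro hc; apply hne; linarith [sub_eq_zero.mp hc]
  have hunit : w0^2 + w1^2 = 1 := by
    have h1 := hxy
    rw [dist_coords] at h1
    have h3 := congrArg (fun r => r^2) h1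
    simp only at h3
    rw [Real.sq_sqrt (by positivity)] at h3
    rw [hw0, hw1]; nlinarith [h3]
  have hw0lt : w0^2 < 1 := by nlinarith [sq_pos_of_ne_zero hw1ne]
  have hw0abs : |w0| < 1 := by
    rw [abs_lt]; constructor <;> nlinarith [sq_nonneg (w0-1), sq_nonneg (w0+1)]
  obtain ⟨c0, hc0⟩ : ∃ c0 : ℝ, c0 = (x.1 0 + y.1 0)/2 := ⟨_, rfl⟩
  obtain ⟨c1, hc1⟩ : ∃ c1 : ℝ, c1 = (x.1 1 + y.1 1)/2 := ⟨_, rfl⟩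
  have hx1 := strip_mem x.2
  have hy1 := strip_mem y.2
  have hc1mem : 0 ≤ c1 ∧ c1 ≤ ε := by rw [hc1]; constructor <;> linarith
  obtain ⟨R, hR⟩ : ∃ R : ℕ, 4 + 1/eta ε ≤ (R:ℝ) :=
    ⟨⌈4 + 1/eta ε⌉₊, Nat.le_ceil _⟩
  have hRpos : (0:ℝ) ≤ R := Nat.cast_nonneg R
  have humem : ∀ k : ℕ, pt (c0 + ((R:ℝ) + k + 1/2)) c1 ∈ Strip ε :=
    fun k => strip_mem' hc1mem.1 hc1mem.2
  refine ⟨fun k => ⟨pt (c0 + ((R:ℝ) + k + 1/2)) c1, humem k⟩, R + 1, fun k => ?_, fun k => ?_⟩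
  · show dist (pt (c0 + ((R:ℝ) + k + 1/2)) c1) (pt (c0 + ((R:ℝ) + (k+1:ℕ) + 1/2)) c1) = 1
    rw [dist_pt_pt]
    have he : (c0 + ((R:ℝ) + k + 1/2) - (c0 + ((R:ℝ) + (k+1:ℕ) + 1/2)))^2 + (c1 - c1)^2 = 1 := by
      push_cast; ring_nf
    rw [he, Real.sqrt_one]
  · constructor
    · apply window_dist hε x _ (Or.inl rfl) hunit hw0abs
        (S := (R:ℝ) + k + 1/2) (by push_cast; linarith)
      · show c0 + ((R:ℝ) + k + 1/2) - x.1 0 = (R:ℝ) + k + 1/2 + 1*w0/2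
        rw [hc0, hw0]; ring
      · show c1 - x.1 1 = 1*w1/2
        rw [hc1, hw1]; ring
      · push_cast; ring
    · apply window_dist hε y _ (Or.inr rfl) hunit hw0abs
        (S := (R:ℝ) + k + 1/2) (by push_cast; linarith)
      · show c0 + ((R:ℝ) + k + 1/2) - y.1 0 = (R:ℝ) + k + 1/2 + (-1)*w0/2
        rw [hc0, hw0]; ring
      · show c1 - y.1 1 = (-1)*w1/2
        rw [hc1, hw1]; ring
      · push_cast; ring

private lemma sq_eq_of_nonneg {A B : ℝ} (hA : 0 ≤ A) (hB : 0 ≤ B) (h : A^2 = B^2) : A = B :=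
  le_antisymm (le_of_sq_le_sq' (le_of_eq h) hB) (le_of_sq_le_sq' (le_of_eq h.symm) hA)

private lemma alpha_bound {m Ea Eb P Q ς ε : ℝ} (hε : 0 < ε)
    (hς : ς^2 = 1) (hP : 0 ≤ ς*P)
    (hEb : Eb^2 = P^2 + Q^2) (hEa : Ea^2 = (P+ς)^2 + Q^2)
    (hQ : Q^2 ≤ ε^2)
    (hwa1 : m - 1 < Ea) (hwa2 : Ea ≤ m) (hwb1 : m - 1 < Eb) (hwb2 : Eb ≤ m)
    (hm : 2*ε + 2 ≤ m) :
    (m - Ea) * (m + Ea) < 2*ε := by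
  have hEbnn : (0:ℝ) ≤ Eb := by linarith
  have hεEb : ε ≤ Eb := by linarith
  have hD : Eb - ε ≤ ς*P := by
    apply le_of_sq_le_sq' _ hP
    nlinarith [hς]
  have hEa2 : Ea^2 = Eb^2 + 2*(ς*P) + 1 := by linear_combination hEa - hEb + hς
  nlinarith [hD, hEa2, sq_nonneg (Eb + 1 - m)]

private lemma step_collinear {A0 A1 B0 B1 m : ℝ} (hm : 0 < m)
    (hA : A0^2 + A1^2 = m^2) (hB : B0^2 + B1^2 = 1)
    (hAB : (A0+B0)^2 + (A1+B1)^2 = (m+1)^2) : B1 * m = A1 := by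
  have hdot : A0*B0 + A1*B1 = m := by linear_combination (hAB - hA - hB)/2
  have hzero : (m*B0 - A0)^2 + (m*B1 - A1)^2 = 0 := by
    linear_combination m^2*hB - 2*m*hdot + hA
  have h1 : (m*B1 - A1)^2 = 0 := by nlinarith [sq_nonneg (m*B0 - A0), sq_nonneg (m*B1 - A1)]
  have h2 : m*B1 - A1 = 0 := by
    exact pow_eq_zero_iff (n := 2) (by norm_num) |>.mp h1
  linarith

/-- thresholds -/
def bigC (ε : ℝ) : ℝ := 2*(4 + 1/eta ε) + 2*(5 + 1/eta ε) + 2*ε + 2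

private lemma window_of_dist {ε : ℝ} (hε : 0 < ε) (z w : Strip ε) {m : ℕ}
    (hm : (stripGraph ε).dist z w = m) (hbig : bigC ε < (m:ℝ)) :
    (m:ℝ) - 1 < dist z.1 w.1 ∧ dist z.1 w.1 ≤ m := by
  have hetapos := eta_pos hε
  have hpos : (0:ℝ) < 1/eta ε := by positivity
  have hfar : 4 + 1/eta ε ≤ dist z.1 w.1 := by
    by_contra hc
    push_neg at hc
    obtain ⟨_, hb⟩ := dist_global hε z w
    rw [hm] at hb
    rw [bigC] at hbig
    linarith
  have hform := dist_formula hε z w hfar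
  rw [hm] at hform
  have hm0 : m ≠ 0 := by
    intro hc
    rw [hc] at hbig
    rw [bigC] at hbig
    push_cast at hbig
    linarith
  rw [eq_comm, Nat.ceil_eq_iff hm0] at hform
  obtain ⟨h1, h2⟩ := hform
  constructor
  · have h5 : 1 ≤ m := Nat.one_le_iff_ne_zero.mpr hm0
    have : ((m-1 : ℕ):ℝ) = (m:ℝ) - 1 := by push_cast [h5]; ring
    rw [← this]; exact h1
  · exact h2

set_option maxHeartbeats 2000000 in
/-- core: an equidistant ray relative to a horizontal unit pair is impossible -/
private lemma no_ray_aux {ε : ℝ} (hε : 0 < ε) (a b : Strip ε) {ς : ℝ}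
    (hς1 : ς = 1 ∨ ς = -1) (hb0 : b.1 0 = a.1 0 + ς) (hb1 : b.1 1 = a.1 1)
    (v : ℕ → Strip ε) {N₀ : ℕ}
    (hbig : bigC ε + 2*ε + 4 < (N₀:ℝ))
    (hadj : ∀ j, dist (v j).1 (v (j+1)).1 = 1)
    (hda : ∀ j, (stripGraph ε).dist a (v j) = N₀ + j)
    (hdb : ∀ j, (stripGraph ε).dist b (v j) = N₀ + j)
    (hside : ∀ j, 0 ≤ ς * ((v j).1 0 - b.1 0)) : False := by
  have hetapos := eta_pos hε
  have hς2 : ς^2 = 1 := by rcases hς1 with h|h <;> rw [h] <;> norm_num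
  have hbigC0 : 0 < bigC ε := by
    rw [bigC]
    have h0 : (0:ℝ) < 1/eta ε := by positivity
    linarith
  have hNj : ∀ j : ℕ, bigC ε < ((N₀ + j : ℕ):ℝ) := by
    intro j
    push_cast
    have : (0:ℝ) ≤ j := Nat.cast_nonneg j
    linarith
  have hN2 : ∀ j : ℕ, 2*ε + 2 ≤ ((N₀ + j : ℕ):ℝ) := by
    intro j
    push_cast
    have : (0:ℝ) ≤ j := Nat.cast_nonneg j
    linarith
  -- windows
  have hwa := fun j => window_of_dist hε a (v j) (hda j) (hNj j)
  have hwb := fun j => window_of_dist hε b (v j) (hdb j) (hNj j)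
  -- coordinates
  have hq : ∀ j : ℕ, ((v j).1 1 - b.1 1)^2 ≤ ε^2 := by
    intro j
    have h1 := strip_mem (v j).2
    have h2 := strip_mem b.2
    nlinarith [h1.1, h1.2, h2.1, h2.2]
  have hEb2 : ∀ j, (dist b.1 (v j).1)^2 = ((v j).1 0 - b.1 0)^2 + ((v j).1 1 - b.1 1)^2 := by
    intro j
    rw [dist_coords, Real.sq_sqrt (by positivity)]
    ring
  have hEa2 : ∀ j, (dist a.1 (v j).1)^2
      = (((v j).1 0 - b.1 0) + ς)^2 + ((v j).1 1 - b.1 1)^2 := by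
    intro j
    rw [dist_coords, Real.sq_sqrt (by positivity), hb0, hb1]
    ring
  -- the alpha sequence
  have halpha : ∀ j : ℕ, (((N₀+j:ℕ):ℝ) - dist a.1 (v j).1) * (((N₀+j:ℕ):ℝ) + dist a.1 (v j).1)
      < 2*ε := by
    intro j
    exact alpha_bound hε hς2 (hside j) (hEb2 j) (hEa2 j) (hq j)
      (hwa j).1 (hwa j).2 (hwb j).1 (hwb j).2 (hN2 j)
  have halpha0 : ∀ j : ℕ, 0 ≤ ((N₀+j:ℕ):ℝ) - dist a.1 (v j).1 := by
    intro j; linarith [(hwa j).2]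
  have hmono : ∀ j : ℕ, ((N₀+j:ℕ):ℝ) - dist a.1 (v j).1
      ≤ ((N₀+(j+1):ℕ):ℝ) - dist a.1 (v (j+1)).1 := by
    intro j
    have htri : dist a.1 (v (j+1)).1 ≤ dist a.1 (v j).1 + dist (v j).1 (v (j+1)).1 :=
      dist_triangle _ _ _
    rw [hadj j] at htri
    push_cast
    linarith
  have hmono' : ∀ j j' : ℕ, j ≤ j' → ((N₀+j:ℕ):ℝ) - dist a.1 (v j).1
      ≤ ((N₀+j':ℕ):ℝ) - dist a.1 (v j').1 := by
    intro j j' hle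
    induction j' with
    | zero =>
      have hj0 : j = 0 := Nat.le_zero.mp hle
      subst hj0
      exact le_refl _
    | succ n ihn =>
      rcases Nat.lt_or_ge j (n+1) with hlt | hge
      · have h1 := ihn (Nat.lt_succ_iff.mp hlt)
        exact le_trans h1 (hmono n)
      · have : j = n+1 := le_antisymm hle hge
        subst this
        exact le_refl _
  -- alpha is zero
  have hzero : ∀ j : ℕ, ((N₀+j:ℕ):ℝ) - dist a.1 (v j).1 = 0 := by
    intro j
    by_contra hc
    have hposα : 0 < ((N₀+j:ℕ):ℝ) - dist a.1 (v j).1 :=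
      lt_of_le_of_ne (halpha0 j) (Ne.symm hc)
    obtain ⟨j', hj'⟩ := exists_nat_gt ((2*ε) / (((N₀+j:ℕ):ℝ) - dist a.1 (v j).1))
    have hle : j ≤ j + j' := Nat.le_add_right _ _
    have h1 := hmono' j (j + j') hle
    have h2 := halpha (j + j')
    have h3 := halpha0 (j + j')
    -- m_{j+j'} ≥ j'
    have hm : (j' : ℝ) ≤ ((N₀+(j+j'):ℕ):ℝ) := by push_cast; linarith [Nat.cast_nonneg (α := ℝ) N₀, Nat.cast_nonneg (α := ℝ) j]
    have h4 : (((N₀+(j+j'):ℕ)):ℝ) + dist a.1 (v (j+j')).1 ≥ (j':ℝ) := by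
      have := dist_nonneg (x := a.1) (y := (v (j+j')).1)
      linarith
    have h5 : (((N₀+j:ℕ):ℝ) - dist a.1 (v j).1) * (j':ℝ) < 2*ε := by
      calc (((N₀+j:ℕ):ℝ) - dist a.1 (v j).1) * (j':ℝ)
          ≤ (((N₀+(j+j'):ℕ):ℝ) - dist a.1 (v (j+j')).1) * (j':ℝ) := by
            apply mul_le_mul_of_nonneg_right h1 (Nat.cast_nonneg j')
      _ ≤ (((N₀+(j+j'):ℕ):ℝ) - dist a.1 (v (j+j')).1)
            * ((((N₀+(j+j'):ℕ)):ℝ) + dist a.1 (v (j+j')).1) := by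
            apply mul_le_mul_of_nonneg_left h4 h3
      _ < 2*ε := h2
    rw [div_lt_iff₀ hposα] at hj'
    linarith [hj']
  -- heights along the ray are constant (collinearity)
  have hEaj : ∀ j, dist a.1 (v j).1 = ((N₀+j:ℕ):ℝ) := by
    intro j; have := hzero j; linarith
  have hqrel : ∀ j : ℕ, ((v (j+1)).1 1 - a.1 1) * ((N₀+j:ℕ):ℝ)
      = ((v j).1 1 - a.1 1) * (((N₀+j:ℕ):ℝ) + 1) := by
    intro j
    have hmpos : (0:ℝ) < ((N₀+j:ℕ):ℝ) := by
      have := hNj j; linarith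
    have hA : ((v j).1 0 - a.1 0)^2 + ((v j).1 1 - a.1 1)^2 = (((N₀+j:ℕ):ℝ))^2 := by
      have h1 := hEaj j
      rw [dist_coords] at h1
      have h2 := congrArg (fun r => r^2) h1
      simp only at h2
      rw [Real.sq_sqrt (by positivity)] at h2
      linear_combination h2
    have hB : ((v (j+1)).1 0 - (v j).1 0)^2 + ((v (j+1)).1 1 - (v j).1 1)^2 = 1 := by
      have h1 := hadj j
      rw [dist_coords] at h1
      have h2 := congrArg (fun r => r^2) h1
      simp only at h2
      rw [Real.sq_sqrt (by positivity)] at h2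
      linear_combination h2
    have hAB : (((v j).1 0 - a.1 0) + ((v (j+1)).1 0 - (v j).1 0))^2
        + (((v j).1 1 - a.1 1) + ((v (j+1)).1 1 - (v j).1 1))^2 = (((N₀+j:ℕ):ℝ) + 1)^2 := by
      have h1 := hEaj (j+1)
      rw [dist_coords] at h1
      have h2 := congrArg (fun r => r^2) h1
      simp only at h2
      rw [Real.sq_sqrt (by positivity)] at h2
      have h3 : ((N₀+(j+1):ℕ):ℝ) = ((N₀+j:ℕ):ℝ) + 1 := by push_cast; ring
      have h4 : (((v j).1 0 - a.1 0) + ((v (j+1)).1 0 - (v j).1 0))^2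
          + (((v j).1 1 - a.1 1) + ((v (j+1)).1 1 - (v j).1 1))^2
          = (a.1 0 - (v (j+1)).1 0)^2 + (a.1 1 - (v (j+1)).1 1)^2 := by ring
      rw [h4, ← h3]
      linear_combination h2
    have h5 := step_collinear hmpos hA hB hAB
    linear_combination h5
  -- telescoping: heights must be exactly equal along the ray
  have hqtel : ∀ j : ℕ, ((v j).1 1 - a.1 1) * (N₀:ℝ) = ((v 0).1 1 - a.1 1) * ((N₀+j:ℕ):ℝ) := by
    intro j
    induction j with
    | zero => push_cast; ring
    | succ n ihn =>
      have hmpos : (0:ℝ) < ((N₀+n:ℕ):ℝ) := by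
        have := hNj n; linarith
      have h1 := hqrel n
      have h2 : ((v (n+1)).1 1 - a.1 1) * (N₀:ℝ) * ((N₀+n:ℕ):ℝ)
          = ((v 0).1 1 - a.1 1) * ((N₀+(n+1):ℕ):ℝ) * ((N₀+n:ℕ):ℝ) := by
        have h3 : ((N₀+(n+1):ℕ):ℝ) = ((N₀+n:ℕ):ℝ) + 1 := by push_cast; ring
        calc ((v (n+1)).1 1 - a.1 1) * (N₀:ℝ) * ((N₀+n:ℕ):ℝ)
            = (((v (n+1)).1 1 - a.1 1) * ((N₀+n:ℕ):ℝ)) * (N₀:ℝ) := by ring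
        _ = (((v n).1 1 - a.1 1) * (((N₀+n:ℕ):ℝ) + 1)) * (N₀:ℝ) := by rw [h1]
        _ = (((v n).1 1 - a.1 1) * (N₀:ℝ)) * (((N₀+n:ℕ):ℝ) + 1) := by ring
        _ = (((v 0).1 1 - a.1 1) * ((N₀+n:ℕ):ℝ)) * (((N₀+n:ℕ):ℝ) + 1) := by rw [ihn]
        _ = ((v 0).1 1 - a.1 1) * ((N₀+(n+1):ℕ):ℝ) * ((N₀+n:ℕ):ℝ) := by rw [h3]; ring
      exact mul_right_cancel₀ (ne_of_gt hmpos) h2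
  have hq0 : (v 0).1 1 - a.1 1 = 0 := by
    by_contra hc
    have hqb : ∀ j : ℕ, |((v j).1 1 - a.1 1)| ≤ ε := by
      intro j
      have h1 := strip_mem (v j).2
      have h2 := strip_mem a.2
      rw [abs_le]
      constructor <;> linarith [h1.1, h1.2, h2.1, h2.2]
    have hN0pos : (0:ℝ) < (N₀:ℝ) := by
      have := hbig
      linarith [hbigC0, hε]
    rcases lt_or_gt_of_ne hc with hneg | hpos
    · -- q0 < 0
      obtain ⟨j, hj⟩ := exists_nat_gt ((ε * (N₀:ℝ)) / (-((v 0).1 1 - a.1 1)))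
      have h1 := hqtel j
      have h2 : -((v j).1 1 - a.1 1) * (N₀:ℝ) = (-((v 0).1 1 - a.1 1)) * ((N₀+j:ℕ):ℝ) := by
        linarith [h1]
      have h3 : -((v j).1 1 - a.1 1) ≤ ε := by
        have := abs_le.1 (hqb j); linarith [this.1]
      have h4 : (-((v 0).1 1 - a.1 1)) * ((N₀+j:ℕ):ℝ) ≤ ε * (N₀:ℝ) := by
        rw [← h2]
        apply mul_le_mul_of_nonneg_right h3 (le_of_lt hN0pos)
      have h5 : (-((v 0).1 1 - a.1 1)) * (j:ℝ) ≤ (-((v 0).1 1 - a.1 1)) * ((N₀+j:ℕ):ℝ) := by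
        apply mul_le_mul_of_nonneg_left _ (by linarith)
        push_cast
        linarith [Nat.cast_nonneg (α := ℝ) N₀]
      rw [div_lt_iff₀ (by linarith)] at hj
      linarith
    · -- q0 > 0
      obtain ⟨j, hj⟩ := exists_nat_gt ((ε * (N₀:ℝ)) / (((v 0).1 1 - a.1 1)))
      have h1 := hqtel j
      have h3 : ((v j).1 1 - a.1 1) ≤ ε := by
        have := abs_le.1 (hqb j); linarith [this.2]
      have h4 : (((v 0).1 1 - a.1 1)) * ((N₀+j:ℕ):ℝ) ≤ ε * (N₀:ℝ) := by
        rw [← h1]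
        apply mul_le_mul_of_nonneg_right h3 (le_of_lt hN0pos)
      have h5 : (((v 0).1 1 - a.1 1)) * (j:ℝ) ≤ (((v 0).1 1 - a.1 1)) * ((N₀+j:ℕ):ℝ) := by
        apply mul_le_mul_of_nonneg_left _ (by linarith)
        push_cast
        linarith [Nat.cast_nonneg (α := ℝ) N₀]
      rw [div_lt_iff₀ (by linarith)] at hj
      linarith
  -- final contradiction at j = 0
  have hQ0 : (v 0).1 1 - b.1 1 = 0 := by rw [hb1]; exact hq0
  obtain ⟨P, hPdef⟩ : ∃ P : ℝ, P = (v 0).1 0 - b.1 0 := ⟨_, rfl⟩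
  have hEb0 : (dist b.1 (v 0).1)^2 = P^2 := by
    rw [hEb2 0, hQ0, hPdef]; ring
  have hEa0 : (dist a.1 (v 0).1)^2 = (P + ς)^2 := by
    rw [hEa2 0, hQ0, hPdef]; ring
  have hPpos : 0 ≤ ς * P := by rw [hPdef]; exact hside 0
  have hςP2 : (ς*P)^2 = P^2 := by nlinarith [hς2]
  have hEbval : dist b.1 (v 0).1 = ς * P := by
    apply sq_eq_of_nonneg dist_nonneg hPpos
    rw [hEb0, hςP2]
  have hςPp2 : (ς*(P+ς))^2 = (P+ς)^2 := by nlinarith [hς2]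
  have hPp : 0 ≤ ς * (P + ς) := by nlinarith [hς2]
  have hEaval : dist a.1 (v 0).1 = ς * (P + ς) := by
    apply sq_eq_of_nonneg dist_nonneg hPp
    rw [hEa0, hςPp2]
  have hEa0' : dist a.1 (v 0).1 = ((N₀+0:ℕ):ℝ) := hEaj 0
  have hwbs := (hwb 0).1
  -- E_b = E_a - 1 = N₀ - 1, contradicting the window E_b > N₀ - 1
  have hdiff : dist a.1 (v 0).1 = dist b.1 (v 0).1 + 1 := by
    rw [hEaval, hEbval]
    nlinarith [hς2]
  rw [hEa0'] at hdiff
  linarith [hwbs, hdiff]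

set_option maxHeartbeats 2000000 in
lemma no_tilt_of_horizontal {ε : ℝ} (hε : 0 < ε) (x y : Strip ε)
    (hxy : dist x.1 y.1 = 1) (hh : x.1 1 = y.1 1) : ¬ TiltW x y := by
  rintro ⟨u, n₀, hadj, hdist⟩
  have hetapos := eta_pos hε
  have hbigC0 : 0 < bigC ε := by
    rw [bigC]
    have h0 : (0:ℝ) < 1/eta ε := by positivity
    linarith
  -- x and y differ by exactly 1 horizontally
  have hxy2 : (x.1 0 - y.1 0)^2 = 1 := by
    have h1 := hxy
    rw [dist_coords] at h1
    have h2 := congrArg (fun r => r^2) h1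
    simp only at h2
    rw [Real.sq_sqrt (by positivity)] at h2
    have h3 : (x.1 1 - y.1 1) = 0 := by rw [hh]; ring
    rw [h3] at h2
    linarith [h2]
  have hcases : y.1 0 = x.1 0 + 1 ∨ y.1 0 = x.1 0 + (-1) := by
    have h1 : (x.1 0 - y.1 0 - 1) * (x.1 0 - y.1 0 + 1) = 0 := by nlinarith [hxy2]
    rcases mul_eq_zero.mp h1 with h2 | h2
    · right; linarith
    · left; linarith
  -- choose the far threshold
  obtain ⟨K, hK⟩ : ∃ K : ℕ, bigC ε + 2*ε + 4 < (K:ℝ) := by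
    obtain ⟨K, hK⟩ := exists_nat_gt (bigC ε + 2*ε + 4)
    exact ⟨K, hK⟩
  obtain ⟨v, hvdef⟩ : ∃ v : ℕ → Strip ε, v = fun j => u (K + j) := ⟨_, rfl⟩
  have hN₀big : bigC ε + 2*ε + 4 < ((n₀ + K : ℕ):ℝ) := by
    push_cast
    have : (0:ℝ) ≤ n₀ := Nat.cast_nonneg n₀
    linarith
  have hvadj : ∀ j, dist (v j).1 (v (j+1)).1 = 1 := by
    intro j
    rw [hvdef]
    simp only
    have : K + (j + 1) = (K + j) + 1 := by omega
    rw [this]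
    exact hadj (K + j)
  have hvd : ∀ j, (stripGraph ε).dist x (v j) = (n₀ + K) + j
      ∧ (stripGraph ε).dist y (v j) = (n₀ + K) + j := by
    intro j
    rw [hvdef]
    simp only
    have h1 := hdist (K + j)
    have : n₀ + (K + j) = (n₀ + K) + j := by omega
    rw [this] at h1
    exact h1
  have hNj : ∀ j : ℕ, bigC ε + 2*ε + 4 < (((n₀+K) + j : ℕ):ℝ) := by
    intro j
    push_cast
    push_cast at hN₀big
    have : (0:ℝ) ≤ j := Nat.cast_nonneg j
    linarith
  -- windows for x
  have hwx := fun j => window_of_dist hε x (v j) (hvd j).1 (by linarith [hNj j])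
  -- the horizontal coordinate is far
  have hpfar : ∀ j : ℕ, 2 ≤ |(v j).1 0 - x.1 0| := by
    intro j
    have h1 := hwx j
    have hq : ((v j).1 1 - x.1 1)^2 ≤ ε^2 := by
      have ha := strip_mem (v j).2
      have hb := strip_mem x.2
      nlinarith [ha.1, ha.2, hb.1, hb.2]
    have hE2 : (dist x.1 (v j).1)^2 = ((v j).1 0 - x.1 0)^2 + ((v j).1 1 - x.1 1)^2 := by
      rw [dist_coords, Real.sq_sqrt (by positivity)]
      ring
    have hEbound : ε + 2 ≤ dist x.1 (v j).1 := by
      have := hNj j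
      have h2 : (0:ℝ) < 1/eta ε := by positivity
      rw [bigC] at this
      linarith [h1.1]
    have h3 : (dist x.1 (v j).1 - ε)^2 ≤ |(v j).1 0 - x.1 0|^2 := by
      rw [sq_abs]
      nlinarith [hq, hE2, hEbound, hε]
    have h4 : dist x.1 (v j).1 - ε ≤ |(v j).1 0 - x.1 0| :=
      le_of_sq_le_sq' h3 (abs_nonneg _)
    linarith [hEbound, h4]
  have hpstep : ∀ j : ℕ, |(v (j+1)).1 0 - (v j).1 0| ≤ 1 := by
    intro j
    have := coord0_le_dist (v (j+1)).1 (v j).1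
    rw [dist_comm] at this
    rw [hvadj j] at this
    exact this
  -- sign constancy
  have hsign : (∀ j : ℕ, 2 ≤ (v j).1 0 - x.1 0) ∨ (∀ j : ℕ, (v j).1 0 - x.1 0 ≤ -2) := by
    rcases le_or_gt 2 ((v 0).1 0 - x.1 0) with h0 | h0
    · left
      intro j
      induction j with
      | zero => exact h0
      | succ n ihn =>
        have h1 := hpfar (n+1)
        have h2 := hpstep n
        rcases abs_le.1 h2 with ⟨h3, h4⟩
        rcases le_or_gt 2 ((v (n+1)).1 0 - x.1 0) with h5 | h5
        · exact h5
        · exfalso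
          have h6 : (v (n+1)).1 0 - x.1 0 ≤ -2 := by
            rcases abs_le.1 (le_of_eq (rfl : |(v (n+1)).1 0 - x.1 0| = _)) with _
            rcases le_or_gt 0 ((v (n+1)).1 0 - x.1 0) with h7 | h7
            · exfalso
              rw [abs_of_nonneg h7] at h1
              linarith
            · rw [abs_of_neg h7] at h1
              linarith
          linarith
    · right
      have h0' : (v 0).1 0 - x.1 0 ≤ -2 := by
        have h1 := hpfar 0
        rcases le_or_gt 0 ((v 0).1 0 - x.1 0) with h7 | h7
        · exfalso
          rw [abs_of_nonneg h7] at h1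
          linarith
        · rw [abs_of_neg h7] at h1
          linarith
      intro j
      induction j with
      | zero => exact h0'
      | succ n ihn =>
        have h1 := hpfar (n+1)
        have h2 := hpstep n
        rcases abs_le.1 h2 with ⟨h3, h4⟩
        rcases le_or_gt 0 ((v (n+1)).1 0 - x.1 0) with h7 | h7
        · exfalso
          rw [abs_of_nonneg h7] at h1
          linarith
        · rw [abs_of_neg h7] at h1
          linarith
  -- instantiate the core lemma, four symmetric cases
  rcases hcases with hy | hy
  · rcases hsign with hp | hp
    · -- u east, y east of x : (a,b) = (x,y), ς = 1
      exact no_ray_aux hε x y (Or.inl rfl) (by rw [hy]) hh.symm v hN₀big hvadj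
        (fun j => (hvd j).1) (fun j => (hvd j).2)
        (fun j => by rw [hy]; simp only [one_mul]; linarith [hp j])
    · -- u west, y east of x : (a,b) = (y,x), ς = -1
      exact no_ray_aux hε y x (Or.inr rfl) (by rw [hy]; ring) hh v hN₀big hvadj
        (fun j => (hvd j).2) (fun j => (hvd j).1)
        (fun j => by nlinarith [hp j])
  · rcases hsign with hp | hp
    · -- u east, y west of x : (a,b) = (y,x), ς = 1
      exact no_ray_aux hε y x (Or.inl rfl) (by rw [hy]; ring) hh v hN₀big hvadj
        (fun j => (hvd j).2) (fun j => (hvd j).1)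
        (fun j => by simp only [one_mul]; linarith [hp j])
    · -- u west, y west of x : (a,b) = (x,y), ς = -1
      exact no_ray_aux hε x y (Or.inr rfl) (by rw [hy]) hh.symm v hN₀big hvadj
        (fun j => (hvd j).1) (fun j => (hvd j).2)
        (fun j => by rw [hy]; nlinarith [hp j])

lemma iso_dist {ε₁ ε₂ : ℝ} (hε₁ : 0 < ε₁) (hε₂ : 0 < ε₂) (f : stripGraph ε₁ ≃g stripGraph ε₂)
    (u v : Strip ε₁) : (stripGraph ε₂).dist (f u) (f v) = (stripGraph ε₁).dist u v := by
  have h1 : (stripGraph ε₁).Reachable u v := (dist_global hε₁ u v).1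
  have h2 : (stripGraph ε₂).Reachable (f u) (f v) := (dist_global hε₂ (f u) (f v)).1
  apply le_antisymm
  · obtain ⟨p, hp⟩ := h1.exists_walk_length_eq_dist
    calc (stripGraph ε₂).dist (f u) (f v) ≤ (p.map f.toHom).length :=
          SimpleGraph.dist_le _
    _ = p.length := by rw [SimpleGraph.Walk.length_map]
    _ = _ := hp
  · obtain ⟨p, hp⟩ := h2.exists_walk_length_eq_dist
    calc (stripGraph ε₁).dist u v
        ≤ ((p.map f.symm.toHom).copy (f.symm_apply_apply u) (f.symm_apply_apply v)).length :=
          SimpleGraph.dist_le _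
    _ = (p.map f.symm.toHom).length := by rw [SimpleGraph.Walk.length_copy]
    _ = p.length := by rw [SimpleGraph.Walk.length_map]
    _ = _ := hp

lemma tiltW_map {ε₁ ε₂ : ℝ} (hε₁ : 0 < ε₁) (hε₂ : 0 < ε₂)
    (f : stripGraph ε₁ ≃g stripGraph ε₂) (x y : Strip ε₁) (h : TiltW x y) :
    TiltW (f x) (f y) := by
  obtain ⟨u, n₀, hadj, hdist⟩ := h
  refine ⟨fun k => f (u k), n₀, fun k => ?_, fun k => ?_⟩
  · exact f.map_adj_iff.mpr (hadj k)
  · rw [iso_dist hε₁ hε₂ f, iso_dist hε₁ hε₂ f]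
    exact hdist k


/-- An isomorphism of the unit distance graphs of two strips preserves horizontality of
unit segments: if `‖x - y‖ = 1`, then `x` and `y` have equal second coordinates iff
`f x` and `f y` do. -/
theorem strip_iso_preserves_horizontal_unit (ε₁ ε₂ : ℝ) (hε₁ : 0 < ε₁) (hε₂ : 0 < ε₂)
    (f : stripGraph ε₁ ≃g stripGraph ε₂) (x y : Strip ε₁)
    (hxy : dist x.1 y.1 = 1) :
    x.1 1 = y.1 1 ↔ (f x).1 1 = (f y).1 1 := by
  have hadj : (stripGraph ε₁).Adj x y := hxy
  have hfd : dist (f x).1 (f y).1 = 1 := f.map_adj_iff.mpr hadj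
  constructor
  · intro h
    by_contra hne
    have h1 := tilt_of_tilted hε₂ (f x) (f y) hfd hne
    have h2 := tiltW_map hε₂ hε₁ f.symm _ _ h1
    rw [f.symm_apply_apply, f.symm_apply_apply] at h2
    exact no_tilt_of_horizontal hε₁ x y hxy h h2
  · intro h
    by_contra hne
    have h1 := tilt_of_tilted hε₁ x y hxy hne
    have h2 := tiltW_map hε₁ hε₂ f x y h1
    exact no_tilt_of_horizontal hε₂ (f x) (f y) hfd h h2
end
end
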